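/- arXiv:1705.08655 — 4 statements merged into one kernel-verified Lean document; each statement's English description precedes it below -/
import Mathlib

section
/- A partition λ of n, where 2^t is the largest binary digit of n, is odd if and only if λ contains a unique hook of length 2^t and the partition obtained by removing this 2^t-hook is an odd partition of n − 2^t. -/
/-- A partition, given by its weakly decreasing sequence of parts (eventually zero). -/
structure SeqPartition where
  parts : ℕ → ℕ
  antitone : Antitone parts
  finite : ∃ N, parts N = 0

namespace SeqPartition

/-- The size `|λ|` of a partition: the sum of its parts. -/
noncomputable def size (l : SeqPartition) : ℕ := ∑ᶠ i, l.parts i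

/-- The parts of the conjugate partition. -/
noncomputable def conjParts (l : SeqPartition) (j : ℕ) : ℕ := Nat.card {i : ℕ | j < l.parts i}

/-- The hook length of the cell `(i,j)` (0-indexed) of a partition. -/
noncomputable def hookLength (l : SeqPartition) (i j : ℕ) : ℕ :=
  (l.parts i - j) + (l.conjParts j - i) - 1

/-- The degree of the irreducible character of the symmetric group labelled by `l`,
via the hook length formula. -/
noncomputable def degree (l : SeqPartition) : ℕ :=
  (l.size).factorial / ∏ᶠ (p : ℕ × ℕ) (_ : p.2 < l.parts p.1), l.hookLength p.1 p.2

/-- A partition is odd if the corresponding irreducible character of the symmetric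
group has odd degree. -/
noncomputable def IsOdd (l : SeqPartition) : Prop := Odd l.degree

/-- A hook partition: all parts beyond the first are at most 1. -/
def IsHook (l : SeqPartition) : Prop := ∀ i, 1 ≤ i → l.parts i ≤ 1

/-- The beta-set (set of first-column hook lengths) of `l` computed with `N` beads. -/
def betaSet (l : SeqPartition) (N : ℕ) : Finset ℕ :=
  (Finset.range N).image (fun i => l.parts i + (N - 1 - i))

/-- `RemoveHook l m h` : `m` is obtained from `l` by removing a hook of length `h`,
expressed via beta-sets. -/
def RemoveHook (l m : SeqPartition) (h : ℕ) : Prop :=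
  ∃ N, l.parts N = 0 ∧ m.parts N = 0 ∧
    ∃ x ∈ l.betaSet N, h ≤ x ∧ x - h ∉ l.betaSet N ∧
      m.betaSet N = insert (x - h) ((l.betaSet N).erase x)

/-- `IsECore e l c` : `c` is the `e`-core of `l`, i.e. it is obtained from `l` by
successively removing `e`-hooks and has no `e`-hook. -/
def IsECore (e : ℕ) (l c : SeqPartition) : Prop :=
  Relation.ReflTransGen (fun a b => RemoveHook a b e) l c ∧ ∀ b, ¬ RemoveHook c b e

/-- `IsQuotient2 l l0 l1` : `(l0, l1)` is the 2-quotient of `l`, via the parity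
splitting of a beta-set with an even number of beads. -/
def IsQuotient2 (l l0 l1 : SeqPartition) : Prop :=
  ∃ N, Even N ∧ l.parts N = 0 ∧
    l0.parts ((l.betaSet N).filter (fun x => x % 2 = 0)).card = 0 ∧
    l1.parts ((l.betaSet N).filter (fun x => x % 2 = 1)).card = 0 ∧
    l0.betaSet ((l.betaSet N).filter (fun x => x % 2 = 0)).card
      = ((l.betaSet N).filter (fun x => x % 2 = 0)).image (fun x => x / 2) ∧
    l1.betaSet ((l.betaSet N).filter (fun x => x % 2 = 1)).card
      = ((l.betaSet N).filter (fun x => x % 2 = 1)).image (fun x => x / 2)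

/-- `IsQuotRow k l f` : `f 0, …, f (2^k - 1)` is the `k`-th row of the 2-quotient
tower of `l`. -/
def IsQuotRow : ℕ → SeqPartition → (ℕ → SeqPartition) → Prop
  | 0, l, f => f 0 = l
  | k + 1, l, f => ∃ g : ℕ → SeqPartition, IsQuotRow k l g ∧
      ∀ i < 2 ^ k, IsQuotient2 (g i) (f (2 * i)) (f (2 * i + 1))

/-- `DGood d l` : `|l| ≡ 2^d - 1 (mod 2^(d+1))` and the `2^d`-core of `l` is a hook
partition. -/
def DGood (d : ℕ) (l : SeqPartition) : Prop :=
  l.size % 2 ^ (d + 1) = 2 ^ d - 1 ∧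
  ∃ c : SeqPartition, IsECore (2 ^ d) l c ∧ c.IsHook

end SeqPartition

open SeqPartition

/-!
Encode `λ` by a beta-set `B` of `N` beads. The cells of `λ` correspond to the pairs (bead `x`,
empty position `y < x`), with hook length `x - y`, so the number `H_d` of hooks of length divisible
by `d` counts such pairs on a common runner of the `d`-abacus. Counting, for every bead, all
positions below it on its runner gives `H_d + #{pairs of beads on a runner} = ∑_{x ∈ B} ⌊x / d⌋`.
Pushing all beads down their runners then shows `d * H_d ≤ |λ|`, and sliding one bead `h` steps
down its runner, i.e. removing an `h`-hook with `d ∣ h`, lowers `H_d` by exactly `h / d`.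

By the hook length formula and Legendre's formula, `ν₂(f^λ) = ∑_{k ≥ 1} (⌊n / 2^k⌋ - H_{2^k})`, a
sum of nonnegative terms, so `λ` is odd iff `H_{2^k} = ⌊n / 2^k⌋` for all `k`. For
`2^t ≤ n < 2^(t+1)` this gives exactly one hook divisible by `2^t`, necessarily of length `2^t`.
Removing a `2^t`-hook lowers both sides of the `k`-th equation by `2^(t-k)` when `k ≤ t`, and both
sides vanish when `k > t`, so the criterion holds for `λ` iff it holds for `λ` minus that hook.
-/

open Finset

lemma Finset.sum_card_filter_lt {α : Type*} [LinearOrder α] (s : Finset α) :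
    ∑ x ∈ s, #{y ∈ s | y < x} = (#s).choose 2 := by
  classical
  induction s using Finset.induction_on_max with
  | empty => simp
  | insert a s hlt ih =>
    have ha : a ∉ s := fun h => (hlt a h).false
    have hfilter : ∀ x ∈ s, #{y ∈ insert a s | y < x} = #{y ∈ s | y < x} := fun x hx => by
      rw [filter_insert, if_neg (not_lt.2 (hlt x hx).le)]
    rw [sum_insert ha, filter_insert, if_neg (lt_irrefl a), filter_true_of_mem hlt,
      sum_congr rfl hfilter, ih, card_insert_of_notMem ha, Nat.choose_succ_succ',
      Nat.choose_one_right, add_comm]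

lemma Finset.choose_two_card_le_sum (s : Finset ℕ) : (#s).choose 2 ≤ ∑ x ∈ s, x := by
  rw [← s.sum_card_filter_lt]
  refine sum_le_sum fun x _ => ?_
  simpa using card_le_card (show {y ∈ s | y < x} ⊆ range x from fun y hy => by simp_all)

namespace Abacus

-- On the abacus with `d` runners (the residues mod `d`) and beads at `B`: the pairs of a bead `x`
-- and an empty position below it on its runner, and the number of beads below `x` on its runner.

def gapCount (d : ℕ) (B : Finset ℕ) : ℕ :=
  ∑ x ∈ B, #{y ∈ range x | y ∉ B ∧ y ≡ x [MOD d]}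

def beadsBelow (d : ℕ) (B : Finset ℕ) (x : ℕ) : ℕ :=
  #{y ∈ range x | y ∈ B ∧ y ≡ x [MOD d]}

variable {d : ℕ} (B : Finset ℕ)

lemma card_filter_modEq_range (hd : 0 < d) (x : ℕ) :
    #{y ∈ range x | y ≡ x [MOD d]} = x / d := by
  rw [← Nat.count_eq_card_filter_range, Nat.count_modEq_card x hd, if_neg (lt_irrefl _),
    add_zero]

lemma gapCount_add_sum_beadsBelow (hd : 0 < d) :
    gapCount d B + ∑ x ∈ B, beadsBelow d B x = ∑ x ∈ B, x / d := by
  rw [gapCount, ← sum_add_distrib]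
  refine sum_congr rfl fun x _ => ?_
  rw [beadsBelow, ← card_filter_modEq_range hd x, add_comm,
    ← card_filter_add_card_filter_not (s := {y ∈ range x | y ≡ x [MOD d]}) (· ∈ B),
    filter_filter, filter_filter]
  simp only [and_comm]

lemma sum_beadsBelow (hd : 0 < d) :
    ∑ x ∈ B, beadsBelow d B x = ∑ r ∈ range d, (#{x ∈ B | x % d = r}).choose 2 := by
  rw [← sum_fiberwise_of_maps_to (g := (· % d)) (t := range d)
    fun x _ => mem_range.2 (Nat.mod_lt x hd)]
  refine sum_congr rfl fun r _ => ?_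
  rw [← sum_card_filter_lt]
  refine sum_congr rfl fun x hx => congrArg card (ext fun y => ?_)
  simp only [mem_filter, mem_range] at hx ⊢
  rw [Nat.ModEq, hx.2]
  tauto

lemma beadsBelow_lt_beadsBelow {x x' : ℕ} (hx : x ∈ B) (hxx' : x < x')
    (hmod : x ≡ x' [MOD d]) :
    beadsBelow d B x < beadsBelow d B x' := by
  refine card_lt_card ((ssubset_iff_of_subset fun y hy => ?_).2 ⟨x, ?_, ?_⟩)
  · simp only [mem_filter, mem_range] at hy ⊢
    exact ⟨hy.1.trans hxx', hy.2.1, hy.2.2.trans hmod⟩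
  · simp [hx, hxx', hmod]
  · simp

lemma mul_gapCount_add_choose_two_le (hd : 0 < d) :
    d * gapCount d B + (#B).choose 2 ≤ ∑ x ∈ B, x := by
  -- `φ` pushes every bead as far down its runner as it goes; the beads stay distinct.
  set φ : ℕ → ℕ := fun x => x % d + d * beadsBelow d B x
  have hφ : Set.InjOn φ B := by
    have hmod : ∀ x, φ x % d = x % d := fun x => by simp [φ, Nat.add_mul_mod_self_left]
    have hdiv : ∀ x, φ x / d = beadsBelow d B x := fun x => by
      simp [φ, Nat.add_mul_div_left _ _ hd, Nat.div_eq_of_lt (Nat.mod_lt x hd)]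
    intro x hx x' hx' h
    have hxx' : x ≡ x' [MOD d] := by rw [Nat.ModEq, ← hmod, h, hmod]
    have hb : beadsBelow d B x = beadsBelow d B x' := by rw [← hdiv, h, hdiv]
    rcases lt_trichotomy x x' with hlt | heq | hgt
    · exact absurd hb (beadsBelow_lt_beadsBelow B hx hlt hxx').ne
    · exact heq
    · exact absurd hb (beadsBelow_lt_beadsBelow B hx' hgt hxx'.symm).ne'
  have hsum : ∑ x ∈ B, x = ∑ x ∈ B, x % d + d * ∑ x ∈ B, x / d := by
    rw [mul_sum, ← sum_add_distrib]
    exact sum_congr rfl fun x _ => (Nat.mod_add_div x d).symm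
  have hφsum : ∑ x ∈ B, φ x = ∑ x ∈ B, x % d + d * ∑ x ∈ B, beadsBelow d B x := by
    rw [mul_sum, ← sum_add_distrib]
  have hchoose : (#B).choose 2 ≤ ∑ x ∈ B, φ x := by
    simpa [card_image_of_injOn hφ, sum_image hφ] using (B.image φ).choose_two_card_le_sum
  have hcount := congrArg (d * ·) (gapCount_add_sum_beadsBelow B hd)
  simp only [mul_add] at hcount
  omega

lemma card_filter_mod_insert_erase {x y : ℕ} (hx : x ∈ B) (hy : y ∉ B) (hxy : y % d = x % d)
    (r : ℕ) : #{z ∈ insert y (B.erase x) | z % d = r} = #{z ∈ B | z % d = r} := by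
  rw [filter_insert, filter_erase]
  split_ifs with hr
  · have hxr : x ∈ {z ∈ B | z % d = r} := mem_filter.2 ⟨hx, hxy ▸ hr⟩
    rw [card_insert_of_notMem fun h => hy (mem_filter.1 (mem_of_mem_erase h)).1,
      card_erase_add_one hxr]
  · have hxr : x ∉ {z ∈ B | z % d = r} := fun h => hr (hxy.trans (mem_filter.1 h).2)
    rw [erase_eq_of_notMem hxr]

lemma gapCount_insert_erase_add_div (hd : 0 < d) {h x : ℕ} (hdh : d ∣ h) (hx : x ∈ B)
    (hhx : h ≤ x) (hxh : x - h ∉ B) :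
    gapCount d (insert (x - h) (B.erase x)) + h / d = gapCount d B := by
  have hmod : (x - h) % d = x % d :=
    (Nat.modEq_iff_dvd' (Nat.sub_le x h)).2 (by rwa [Nat.sub_sub_self hhx])
  have hdiv : ∑ z ∈ insert (x - h) (B.erase x), z / d + h / d = ∑ z ∈ B, z / d := by
    rw [sum_insert fun hm => hxh (mem_of_mem_erase hm), add_right_comm,
      ← Nat.add_div_of_dvd_left hdh, Nat.sub_add_cancel hhx, add_comm, sum_erase_add _ _ hx]
  have hbeads : ∑ z ∈ insert (x - h) (B.erase x), beadsBelow d (insert (x - h) (B.erase x)) z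
      = ∑ z ∈ B, beadsBelow d B z := by
    simp only [sum_beadsBelow _ hd, card_filter_mod_insert_erase B hx hxh hmod]
  have hB := gapCount_add_sum_beadsBelow B hd
  have hB' := gapCount_add_sum_beadsBelow (insert (x - h) (B.erase x)) hd
  omega

end Abacus

namespace SeqPartition

variable (l : SeqPartition)

lemma lt_of_parts_pos {N i : ℕ} (hN : l.parts N = 0) (h : 0 < l.parts i) : i < N := by
  by_contra! hNi
  have := l.antitone hNi
  omega

lemma lt_conjParts_iff {i j : ℕ} : i < l.conjParts j ↔ j < l.parts i := by
  have hex : ∃ c, ¬ j < l.parts c := by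
    obtain ⟨N, hN⟩ := l.finite
    exact ⟨N, by omega⟩
  have hIio : {i : ℕ | j < l.parts i} = Set.Iio (Nat.find hex) := by
    ext i
    change j < l.parts i ↔ i < Nat.find hex
    exact ⟨fun h => not_le.1 fun hle => Nat.find_spec hex (h.trans_le (l.antitone hle)),
      fun h => not_not.1 (Nat.find_min hex h)⟩
  rw [conjParts, hIio, Nat.card_coe_set_eq, Set.ncard_Iio_nat]
  exact (Set.ext_iff.1 hIio i).symm

lemma conjParts_le {N : ℕ} (hN : l.parts N = 0) (j : ℕ) : l.conjParts j ≤ N := by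
  by_contra! h
  have := (l.lt_conjParts_iff).1 h
  omega

lemma conjParts_antitone : Antitone l.conjParts := by
  intro j j' hjj'
  by_contra! h
  have := (l.lt_conjParts_iff).1 h
  have := (l.lt_conjParts_iff (i := l.conjParts j) (j := j)).2 (by omega)
  omega

-- With `N` beads (`l.parts N = 0`), row `i` is the bead at `beta N i`, and `coBeta N` lists the
-- empty positions in increasing order.

def beta (N i : ℕ) : ℕ := l.parts i + (N - 1 - i)

noncomputable def coBeta (N j : ℕ) : ℕ := N + j - l.conjParts j

lemma betaSet_eq_image (N : ℕ) : l.betaSet N = (range N).image (l.beta N) := rfl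

lemma mem_betaSet {N x : ℕ} : x ∈ l.betaSet N ↔ ∃ i < N, l.beta N i = x := by
  simp [betaSet_eq_image]

lemma beta_lt_beta {N i i' : ℕ} (h : i < i') (hi' : i' < N) : l.beta N i' < l.beta N i := by
  have := l.antitone h.le
  unfold beta
  omega

lemma beta_injOn (N : ℕ) : Set.InjOn (l.beta N) (range N) := by
  intro i hi i' hi' h
  simp only [coe_range, Set.mem_Iio] at hi hi'
  rcases lt_trichotomy i i' with hlt | heq | hgt
  · exact absurd h (l.beta_lt_beta hlt hi').ne'
  · exact heq
  · exact absurd h (l.beta_lt_beta hgt hi).ne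

lemma card_betaSet (N : ℕ) : #(l.betaSet N) = N := by
  rw [betaSet_eq_image, card_image_of_injOn (l.beta_injOn N), card_range]

lemma coBeta_lt_beta_iff {N i j : ℕ} (hN : l.parts N = 0) (hi : i < N) :
    l.coBeta N j < l.beta N i ↔ j < l.parts i := by
  have := l.conjParts_le hN j
  have := l.lt_conjParts_iff (i := i) (j := j)
  unfold coBeta beta
  omega

lemma coBeta_notMem_betaSet {N : ℕ} (hN : l.parts N = 0) (j : ℕ) :
    l.coBeta N j ∉ l.betaSet N := by
  rintro hmem
  obtain ⟨i, hi, hij⟩ := (l.mem_betaSet).1 hmem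
  have := l.conjParts_le hN j
  have := l.lt_conjParts_iff (i := i) (j := j)
  unfold coBeta beta at hij
  omega

lemma coBeta_strictMono {N : ℕ} (hN : l.parts N = 0) : StrictMono (l.coBeta N) := by
  refine strictMono_nat_of_lt_succ fun j => ?_
  have := l.conjParts_antitone (show j ≤ j + 1 by omega)
  have := l.conjParts_le hN (j + 1)
  unfold coBeta
  omega

lemma le_coBeta {N : ℕ} (hN : l.parts N = 0) (j : ℕ) : j ≤ l.coBeta N j := by
  have := l.conjParts_le hN j
  unfold coBeta
  omega

lemma hookLength_eq_beta_sub_coBeta {N i j : ℕ} (hN : l.parts N = 0) (hij : j < l.parts i) :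
    l.hookLength i j = l.beta N i - l.coBeta N j := by
  have := l.conjParts_le hN j
  have := (l.lt_conjParts_iff (i := i) (j := j)).2 hij
  unfold hookLength beta coBeta
  omega

lemma card_filter_range_coBeta_notMem_betaSet {N : ℕ} (hN : l.parts N = 0) (M : ℕ) :
    #{z ∈ range (l.coBeta N M) | z ∉ l.betaSet N} = M := by
  have hbelow : {z ∈ range (l.coBeta N M) | z ∈ l.betaSet N}
      = (Ico (l.conjParts M) N).image (l.beta N) := by
    ext z
    simp only [mem_filter, mem_range, mem_image, mem_Ico, mem_betaSet]
    constructor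
    · rintro ⟨hz, i, hi, rfl⟩
      have := l.coBeta_lt_beta_iff hN hi (j := M)
      have := l.lt_conjParts_iff (i := i) (j := M)
      exact ⟨i, ⟨by omega, hi⟩, rfl⟩
    · rintro ⟨i, ⟨hMi, hi⟩, rfl⟩
      have := l.coBeta_lt_beta_iff hN hi (j := M)
      have := l.lt_conjParts_iff (i := i) (j := M)
      have hne : l.beta N i ≠ l.coBeta N M := fun h =>
        l.coBeta_notMem_betaSet hN M (h ▸ (l.mem_betaSet).2 ⟨i, hi, rfl⟩)
      exact ⟨by omega, i, hi, rfl⟩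
  have hcard : #{z ∈ range (l.coBeta N M) | z ∈ l.betaSet N}
      + #{z ∈ range (l.coBeta N M) | z ∉ l.betaSet N} = #(range (l.coBeta N M)) :=
    card_filter_add_card_filter_not _
  rw [hbelow, card_image_of_injOn ((l.beta_injOn N).mono (by simp [Set.subset_def])),
    Nat.card_Ico, card_range] at hcard
  have := l.conjParts_le hN M
  have hcoBeta : l.coBeta N M = N + M - l.conjParts M := rfl
  omega

lemma exists_coBeta_eq {N y : ℕ} (hN : l.parts N = 0) (hy : y ∉ l.betaSet N) :
    ∃ j, l.coBeta N j = y := by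
  -- `coBeta N 0, …, coBeta N y` are already all the empty positions below `coBeta N (y + 1)`
  have hsub : (range (y + 1)).image (l.coBeta N)
      ⊆ {z ∈ range (l.coBeta N (y + 1)) | z ∉ l.betaSet N} := by
    intro z hz
    obtain ⟨j, hj, rfl⟩ := mem_image.1 hz
    exact mem_filter.2 ⟨mem_range.2 (l.coBeta_strictMono hN (mem_range.1 hj)),
      l.coBeta_notMem_betaSet hN j⟩
  have heq := eq_of_subset_of_card_le hsub (by
    rw [l.card_filter_range_coBeta_notMem_betaSet hN,
      card_image_of_injective _ (l.coBeta_strictMono hN).injective, card_range])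
  have hy' : y ∈ {z ∈ range (l.coBeta N (y + 1)) | z ∉ l.betaSet N} :=
    mem_filter.2 ⟨mem_range.2 (Nat.lt_of_lt_of_le (Nat.lt_succ_self y) (l.le_coBeta hN _)), hy⟩
  obtain ⟨j, -, hj⟩ := mem_image.1 (heq ▸ hy')
  exact ⟨j, hj⟩

lemma size_eq_sum_range {N : ℕ} (hN : l.parts N = 0) : l.size = ∑ i ∈ range N, l.parts i :=
  finsum_eq_sum_of_support_subset _ fun _ hi =>
    mem_coe.2 (mem_range.2 (l.lt_of_parts_pos hN (Nat.pos_of_ne_zero hi)))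

lemma sum_betaSet {N : ℕ} (hN : l.parts N = 0) :
    ∑ x ∈ l.betaSet N, x = l.size + N.choose 2 := by
  rw [betaSet_eq_image, sum_image (l.beta_injOn N)]
  simp only [beta]
  rw [sum_add_distrib, ← l.size_eq_sum_range hN,
    Nat.choose_two_right, ← sum_range_id, ← sum_range_reflect]
  exact congrArg _ (sum_congr rfl fun j hj => by have := mem_range.1 hj; omega)

lemma exists_betaSet_eq (S : Finset ℕ) :
    ∃ m : SeqPartition, m.parts #S = 0 ∧ m.betaSet #S = S := by
  induction S using Finset.induction_on_max with
  | empty => exact ⟨⟨fun _ => 0, antitone_const, 0, rfl⟩, rfl, rfl⟩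
  | insert a S hlt ih =>
    obtain ⟨m, hmN, hmS⟩ := ih
    have ha : a ∉ S := fun h => (hlt a h).false
    have hcard : #S ≤ a := by
      simpa using card_le_card (show S ⊆ range a from fun x hx => mem_range.2 (hlt x hx))
    have hm0 : m.parts 0 + #S ≤ a := by
      rcases Nat.eq_zero_or_pos #S with h | h
      · rw [h] at hmN ⊢
        omega
      · have hmem := (m.mem_betaSet).2 ⟨0, h, rfl⟩
        rw [hmS] at hmem
        have := hlt _ hmem
        unfold beta at this
        omega
    refine ⟨⟨fun i => if i = 0 then a - #S else m.parts (i - 1), ?_, #S + 1, ?_⟩, ?_, ?_⟩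
    · refine antitone_nat_of_succ_le fun i => ?_
      rcases i with _ | i
      · show m.parts 0 ≤ a - #S
        omega
      · simpa using m.antitone (Nat.le_succ i)
    · simp [hmN]
    · simp [card_insert_of_notMem ha, hmN]
    · rw [card_insert_of_notMem ha, betaSet_eq_image, range_add_one', image_insert, map_eq_image,
        image_image]
      conv_rhs => rw [← hmS, betaSet_eq_image]
      congr 1
      · simp only [beta, if_pos]
        omega
      · refine image_congr fun i _ => ?_
        simp only [beta, Function.comp_apply]
        change m.parts (i + 1 - 1) + (#S - (i + 1)) = m.parts i + (#S - 1 - i)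
        rw [Nat.add_sub_cancel]
        omega

noncomputable def cells : Finset (ℕ × ℕ) :=
  {p ∈ range (l.conjParts 0) ×ˢ range (l.parts 0) | p.2 < l.parts p.1}

noncomputable def numDvdHooks (d : ℕ) : ℕ := #{p ∈ l.cells | d ∣ l.hookLength p.1 p.2}

lemma mem_cells {p : ℕ × ℕ} : p ∈ l.cells ↔ p.2 < l.parts p.1 := by
  have := l.antitone (Nat.zero_le p.1)
  have := l.lt_conjParts_iff (i := p.1) (j := 0)
  simp only [cells, mem_filter, mem_product, mem_range]
  omega

lemma parts_conjParts_le (j : ℕ) : l.parts (l.conjParts j) ≤ j :=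
  not_lt.1 fun h => (lt_irrefl _) ((l.lt_conjParts_iff).2 h)

lemma card_cells : #l.cells = l.size := by
  rw [l.size_eq_sum_range (Nat.eq_zero_of_le_zero (l.parts_conjParts_le 0)), cells, card_filter,
    sum_product]
  refine sum_congr rfl fun i _ => ?_
  rw [← card_filter]
  have := l.antitone (Nat.zero_le i)
  convert card_range (l.parts i) using 2
  ext j
  simp only [mem_filter, mem_range]
  omega

lemma numDvdHooks_one : l.numDvdHooks 1 = l.size := by
  simp [numDvdHooks, card_cells]

lemma numDvdHooks_eq_gapCount {N : ℕ} (hN : l.parts N = 0) (d : ℕ) :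
    l.numDvdHooks d = Abacus.gapCount d (l.betaSet N) := by
  rw [Abacus.gapCount, ← card_sigma]
  refine card_bij (fun p _ => ⟨l.beta N p.1, l.coBeta N p.2⟩) ?_ ?_ ?_
  · rintro ⟨i, j⟩ hp
    simp only [mem_filter, mem_cells] at hp
    have hi := l.lt_of_parts_pos hN (Nat.zero_lt_of_lt hp.1)
    have hlt := (l.coBeta_lt_beta_iff hN hi).2 hp.1
    rw [l.hookLength_eq_beta_sub_coBeta hN hp.1] at hp
    simp only [mem_sigma, mem_filter, mem_range]
    exact ⟨(l.mem_betaSet).2 ⟨i, hi, rfl⟩, hlt, l.coBeta_notMem_betaSet hN j,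
      (Nat.modEq_iff_dvd' hlt.le).2 hp.2⟩
  · rintro ⟨i, j⟩ hp ⟨i', j'⟩ hp' h
    simp only [mem_filter, mem_cells] at hp hp'
    simp only [Sigma.mk.inj_iff, heq_eq_eq] at h
    rw [Prod.mk.injEq]
    exact ⟨l.beta_injOn N (mem_range.2 (l.lt_of_parts_pos hN (Nat.zero_lt_of_lt hp.1)))
      (mem_range.2 (l.lt_of_parts_pos hN (Nat.zero_lt_of_lt hp'.1))) h.1,
      (l.coBeta_strictMono hN).injective h.2⟩
  · rintro ⟨x, y⟩ hxy
    simp only [mem_sigma, mem_filter, mem_range] at hxy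
    obtain ⟨hx, hyx, hy, hmod⟩ := hxy
    obtain ⟨i, hi, rfl⟩ := (l.mem_betaSet).1 hx
    obtain ⟨j, rfl⟩ := l.exists_coBeta_eq hN hy
    have hj := (l.coBeta_lt_beta_iff hN hi).1 hyx
    refine ⟨(i, j), ?_, rfl⟩
    simp only [mem_filter, mem_cells]
    rw [l.hookLength_eq_beta_sub_coBeta hN hj]
    exact ⟨hj, (Nat.modEq_iff_dvd' hyx.le).1 hmod⟩

lemma mul_numDvdHooks_le_size {d : ℕ} (hd : 0 < d) : d * l.numDvdHooks d ≤ l.size := by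
  obtain ⟨N, hN⟩ := l.finite
  have := Abacus.mul_gapCount_add_choose_two_le (l.betaSet N) hd
  rw [← l.numDvdHooks_eq_gapCount hN, card_betaSet, l.sum_betaSet hN] at this
  omega

lemma numDvdHooks_le_size_div {d : ℕ} (hd : 0 < d) : l.numDvdHooks d ≤ l.size / d :=
  (Nat.le_div_iff_mul_le hd).2 (mul_comm (l.numDvdHooks d) d ▸ l.mul_numDvdHooks_le_size hd)

lemma numDvdHooks_eq_zero_of_size_lt {d : ℕ} (h : l.size < d) : l.numDvdHooks d = 0 := by
  have := l.numDvdHooks_le_size_div (d := d) (by omega)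
  rwa [Nat.div_eq_of_lt h, Nat.le_zero] at this

lemma RemoveHook.size_add {l m : SeqPartition} {h : ℕ} (hlm : RemoveHook l m h) :
    m.size + h = l.size := by
  obtain ⟨N, hN, hmN, x, hx, hhx, hxh, hB⟩ := hlm
  have hl := l.sum_betaSet hN
  have hm := m.sum_betaSet hmN
  rw [hB, sum_insert fun h => hxh (mem_of_mem_erase h)] at hm
  have := sum_erase_add (l.betaSet N) (fun z => z) hx
  omega

lemma RemoveHook.numDvdHooks_add {l m : SeqPartition} {h d : ℕ} (hlm : RemoveHook l m h)
    (hd : 0 < d) (hdh : d ∣ h) : m.numDvdHooks d + h / d = l.numDvdHooks d := by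
  obtain ⟨N, hN, hmN, x, hx, hhx, hxh, hB⟩ := hlm
  rw [l.numDvdHooks_eq_gapCount hN, m.numDvdHooks_eq_gapCount hmN, hB]
  exact Abacus.gapCount_insert_erase_add_div _ hd hdh hx hhx hxh

lemma exists_removeHook {i j : ℕ} (hij : j < l.parts i) :
    ∃ m, RemoveHook l m (l.hookLength i j) := by
  obtain ⟨N, hN⟩ := l.finite
  have hi := l.lt_of_parts_pos hN (Nat.zero_lt_of_lt hij)
  have hx : l.beta N i ∈ l.betaSet N := (l.mem_betaSet).2 ⟨i, hi, rfl⟩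
  have hlt := (l.coBeta_lt_beta_iff hN hi).2 hij
  have hle : l.hookLength i j ≤ l.beta N i := by
    rw [l.hookLength_eq_beta_sub_coBeta hN hij]
    omega
  have hy : l.beta N i - l.hookLength i j = l.coBeta N j := by
    rw [l.hookLength_eq_beta_sub_coBeta hN hij]
    omega
  have hS : #(insert (l.coBeta N j) ((l.betaSet N).erase (l.beta N i))) = N := by
    rw [card_insert_of_notMem fun h => l.coBeta_notMem_betaSet hN j (mem_of_mem_erase h),
      card_erase_of_mem hx, card_betaSet]
    omega
  obtain ⟨m, hmN, hmS⟩ :=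
    exists_betaSet_eq (insert (l.coBeta N j) ((l.betaSet N).erase (l.beta N i)))
  rw [hS] at hmN hmS
  refine ⟨m, N, hN, hmN, l.beta N i, hx, hle, ?_, ?_⟩ <;> rw [hy]
  exacts [l.coBeta_notMem_betaSet hN j, hmS]

lemma hookLength_le_size {i j : ℕ} (hij : j < l.parts i) : l.hookLength i j ≤ l.size := by
  obtain ⟨m, hm⟩ := l.exists_removeHook hij
  have := hm.size_add
  omega

lemma hookLength_pos {i j : ℕ} (hij : j < l.parts i) : 0 < l.hookLength i j := by
  obtain ⟨N, hN⟩ := l.finite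
  have := (l.coBeta_lt_beta_iff hN (l.lt_of_parts_pos hN (Nat.zero_lt_of_lt hij))).2 hij
  rw [l.hookLength_eq_beta_sub_coBeta hN hij]
  omega

lemma degree_eq : l.degree = l.size.factorial / ∏ p ∈ l.cells, l.hookLength p.1 p.2 := by
  rw [degree, ← finprod_mem_coe_finset]
  simp only [mem_coe, mem_cells]

lemma factorization_prod_hookLength {p : ℕ} (hp : p.Prime) :
    (∏ q ∈ l.cells, l.hookLength q.1 q.2).factorization p
      = ∑ k ∈ Ico 1 (l.size + 1), l.numDvdHooks (p ^ k) := by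
  have hpos : ∀ q ∈ l.cells, 0 < l.hookLength q.1 q.2 := fun q hq =>
    l.hookLength_pos ((l.mem_cells).1 hq)
  rw [Nat.factorization_prod fun q hq => (hpos q hq).ne', sum_apply']
  simp only [numDvdHooks, card_filter]
  rw [sum_comm]
  refine sum_congr rfl fun q hq => ?_
  have hle := l.hookLength_le_size ((l.mem_cells).1 hq)
  have hlt := Nat.lt_pow_self (n := l.size + 1) hp.one_lt
  rw [Nat.factorization_eq_card_pow_dvd_of_lt (b := l.size + 1) hp (hpos q hq) (by omega),
    card_filter]

lemma prod_hookLength_dvd_factorial :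
    ∏ q ∈ l.cells, l.hookLength q.1 q.2 ∣ l.size.factorial := by
  refine (Nat.factorization_le_iff_dvd (prod_pos fun q hq =>
    l.hookLength_pos ((l.mem_cells).1 hq)).ne' (Nat.factorial_ne_zero _)).1 fun p => ?_
  by_cases hp : p.Prime
  · rw [l.factorization_prod_hookLength hp,
      Nat.factorization_factorial hp (Nat.lt_succ_of_le (Nat.log_le_self p _))]
    exact sum_le_sum fun k _ => l.numDvdHooks_le_size_div (pow_pos hp.pos k)
  · simp [Nat.factorization_eq_zero_of_not_prime _ hp]

lemma isOdd_iff_forall_numDvdHooks :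
    l.IsOdd ↔ ∀ k, l.numDvdHooks (2 ^ k) = l.size / 2 ^ k := by
  have hdvd := l.prod_hookLength_dvd_factorial
  have hprod : 0 < ∏ q ∈ l.cells, l.hookLength q.1 q.2 :=
    prod_pos fun q hq => l.hookLength_pos ((l.mem_cells).1 hq)
  have hdeg : l.degree ≠ 0 := by
    rw [degree_eq]
    exact (Nat.div_pos (Nat.le_of_dvd (Nat.factorial_pos _) hdvd) hprod).ne'
  have hodd : l.IsOdd ↔ l.degree.factorization 2 = 0 := by
    simp [IsOdd, Nat.factorization_eq_zero_iff, Nat.prime_two, hdeg, Nat.odd_iff,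
      Nat.two_dvd_ne_zero]
  have hval : l.degree.factorization 2 = ∑ k ∈ Ico 1 (l.size + 1), l.size / 2 ^ k
      - ∑ k ∈ Ico 1 (l.size + 1), l.numDvdHooks (2 ^ k) := by
    rw [degree_eq, Nat.factorization_div hdvd, Finsupp.coe_tsub, Pi.sub_apply,
      Nat.factorization_factorial Nat.prime_two (Nat.lt_succ_of_le (Nat.log_le_self 2 _)),
      l.factorization_prod_hookLength Nat.prime_two]
  have hle : ∀ k ∈ Ico 1 (l.size + 1), l.numDvdHooks (2 ^ k) ≤ l.size / 2 ^ k :=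
    fun k _ => l.numDvdHooks_le_size_div (pow_pos two_pos k)
  rw [hodd, hval, Nat.sub_eq_zero_iff_le]
  refine ⟨fun h k => ?_, fun h => (sum_congr rfl fun k _ => (h k).symm).le⟩
  have heq := (sum_eq_sum_iff_of_le hle).1 (le_antisymm (sum_le_sum hle) h)
  rcases k.eq_zero_or_pos with rfl | hk
  · simpa using l.numDvdHooks_one
  by_cases hkn : k < l.size + 1
  · exact heq k (mem_Ico.2 ⟨hk, hkn⟩)
  · have hsize : l.size < 2 ^ k :=
      (Nat.lt_pow_self one_lt_two).trans_le (Nat.pow_le_pow_right two_pos (by omega))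
    rw [l.numDvdHooks_eq_zero_of_size_lt hsize, Nat.div_eq_of_lt hsize]

lemma RemoveHook.isOdd_iff {l m : SeqPartition} {t : ℕ} (hlm : RemoveHook l m (2 ^ t))
    (hl : l.size < 2 ^ (t + 1)) : l.IsOdd ↔ m.IsOdd := by
  rw [isOdd_iff_forall_numDvdHooks, isOdd_iff_forall_numDvdHooks]
  refine forall_congr' fun k => ?_
  have hsize := hlm.size_add
  rcases le_or_gt k t with hkt | htk
  · -- removing the hook lowers both sides by `2 ^ t / 2 ^ k`
    have hdvd : 2 ^ k ∣ 2 ^ t := pow_dvd_pow 2 hkt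
    have hhooks := hlm.numDvdHooks_add (pow_pos two_pos k) hdvd
    have hdiv : l.size / 2 ^ k = m.size / 2 ^ k + 2 ^ t / 2 ^ k := by
      rw [← hsize, Nat.add_div_of_dvd_left hdvd]
    omega
  · have hlk : l.size < 2 ^ k := hl.trans_le (Nat.pow_le_pow_right two_pos htk)
    have hmk : m.size < 2 ^ k := by omega
    rw [l.numDvdHooks_eq_zero_of_size_lt hlk, m.numDvdHooks_eq_zero_of_size_lt hmk,
      Nat.div_eq_of_lt hlk, Nat.div_eq_of_lt hmk]

lemma existsUnique_hookLength_eq {d : ℕ} (hsize : l.size < 2 * d)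
    (hcount : l.numDvdHooks d = 1) :
    ∃! p : ℕ × ℕ, p.2 < l.parts p.1 ∧ l.hookLength p.1 p.2 = d := by
  obtain ⟨p, hp⟩ := card_eq_one.1 hcount
  obtain ⟨hpc, c, hc⟩ := mem_filter.1 (hp ▸ mem_singleton_self p)
  have hpos := l.hookLength_pos ((l.mem_cells).1 hpc)
  have hle := l.hookLength_le_size ((l.mem_cells).1 hpc)
  have hc1 : c = 1 := by
    rcases c with _ | _ | c
    · omega
    · rfl
    · nlinarith
  refine ⟨p, ⟨(l.mem_cells).1 hpc, by rw [hc, hc1, mul_one]⟩, fun q hq => ?_⟩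
  have hq' : q ∈ {q ∈ l.cells | d ∣ l.hookLength q.1 q.2} :=
    mem_filter.2 ⟨(l.mem_cells).2 hq.1, hq.2 ▸ dvd_rfl⟩
  rw [hp] at hq'
  exact mem_singleton.1 hq'

end SeqPartition

theorem stmt_7 (n t : ℕ) (h1 : 2 ^ t ≤ n) (h2 : n < 2 ^ (t + 1))
    (l : SeqPartition) (hl : l.size = n) :
    l.IsOdd ↔
      ((∃! p : ℕ × ℕ, p.2 < l.parts p.1 ∧ l.hookLength p.1 p.2 = 2 ^ t) ∧
       ∃ m : SeqPartition, RemoveHook l m (2 ^ t) ∧ m.size = n - 2 ^ t ∧ m.IsOdd) := by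
  subst hl
  constructor
  · intro hodd
    have hcount : l.numDvdHooks (2 ^ t) = 1 := by
      rw [l.isOdd_iff_forall_numDvdHooks.1 hodd t]
      exact Nat.div_eq_of_lt_le (by simpa using h1) (by rwa [pow_succ, mul_comm] at h2)
    obtain ⟨⟨i, j⟩, ⟨hij, hhook⟩, huniq⟩ :=
      l.existsUnique_hookLength_eq (by rwa [pow_succ, mul_comm] at h2) hcount
    obtain ⟨m, hm⟩ := l.exists_removeHook hij
    rw [hhook] at hm
    have hsize := hm.size_add
    exact ⟨⟨(i, j), ⟨hij, hhook⟩, huniq⟩, m, hm, by omega, (hm.isOdd_iff h2).1 hodd⟩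
  · rintro ⟨-, m, hm, -, hmodd⟩
    exact (hm.isOdd_iff h2).2 hmodd
end

section
/- Let λ be a partition of n − 2^k and μ a partition of n. Then λ is obtained from μ by removing a 2^k-hook if and only if: the 2-core towers of λ and μ agree in rows 0 through k−1, and the k-th rows of their 2-quotient towers agree except in one position i ∈ {0,...,2^k − 1}, where λ_i^{(k)} is obtained from μ_i^{(k)} by removing a single node (1-hook). -/
/-!
Write a partition as a beta-set on an even number of beads and sort the beads by parity onto
the two runners of a 2-abacus. Halving the positions on the runners gives the beta-sets of the
2-quotient, and the difference of the bead counts on the runners (the charge) determines the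
2-core: a partition has no 2-hook exactly when both runners are initial segments.

Removing a `2h`-hook moves one bead down by `2h` positions, that is, by `h` positions on one
runner: it removes an `h`-hook from one component of the 2-quotient, fixes the other component
and preserves the charge. Conversely, such a move on one runner lifts to a `2h`-hook between any
two partitions with the same charge. Iterating along the quotient tower, a `2^k`-hook of `μ`
becomes a single node in one partition of the `k`-th row, while the partitions of the rows
above it agree in charge, that is, in 2-core.
-/

/-- A partition, given by its weakly decreasing sequence of parts (eventually zero). -/
structure PartitionSeq where
  parts : ℕ → ℕ
  antitone : Antitone parts
  finite : ∃ N, parts N = 0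

namespace PartitionSeq

/-- The size `|λ|` of a partition: the sum of its parts. -/
noncomputable def size (l : PartitionSeq) : ℕ := ∑ᶠ i, l.parts i

/-- The parts of the conjugate partition. -/
noncomputable def conjParts (l : PartitionSeq) (j : ℕ) : ℕ := Nat.card {i : ℕ | j < l.parts i}

/-- The hook length of the cell `(i,j)` (0-indexed) of a partition. -/
noncomputable def hookLength (l : PartitionSeq) (i j : ℕ) : ℕ :=
  (l.parts i - j) + (l.conjParts j - i) - 1

/-- The degree of the irreducible character of the symmetric group labelled by `l`,
via the hook length formula. -/
noncomputable def degree (l : PartitionSeq) : ℕ :=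
  (l.size).factorial / ∏ᶠ (p : ℕ × ℕ) (_ : p.2 < l.parts p.1), l.hookLength p.1 p.2

/-- A partition is odd if the corresponding irreducible character of the symmetric
group has odd degree. -/
noncomputable def IsOdd (l : PartitionSeq) : Prop := Odd l.degree

/-- A hook partition: all parts beyond the first are at most 1. -/
def IsHook (l : PartitionSeq) : Prop := ∀ i, 1 ≤ i → l.parts i ≤ 1

/-- The beta-set (set of first-column hook lengths) of `l` computed with `N` beads. -/
def betaSet (l : PartitionSeq) (N : ℕ) : Finset ℕ :=
  (Finset.range N).image (fun i => l.parts i + (N - 1 - i))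

/-- `RemoveHook l m h` : `m` is obtained from `l` by removing a hook of length `h`,
expressed via beta-sets. -/
def RemoveHook (l m : PartitionSeq) (h : ℕ) : Prop :=
  ∃ N, l.parts N = 0 ∧ m.parts N = 0 ∧
    ∃ x ∈ l.betaSet N, h ≤ x ∧ x - h ∉ l.betaSet N ∧
      m.betaSet N = insert (x - h) ((l.betaSet N).erase x)

/-- `IsECore e l c` : `c` is the `e`-core of `l`, i.e. it is obtained from `l` by
successively removing `e`-hooks and has no `e`-hook. -/
def IsECore (e : ℕ) (l c : PartitionSeq) : Prop :=
  Relation.ReflTransGen (fun a b => RemoveHook a b e) l c ∧ ∀ b, ¬ RemoveHook c b e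

/-- `IsQuotient2 l l0 l1` : `(l0, l1)` is the 2-quotient of `l`, via the parity
splitting of a beta-set with an even number of beads. -/
def IsQuotient2 (l l0 l1 : PartitionSeq) : Prop :=
  ∃ N, Even N ∧ l.parts N = 0 ∧
    l0.parts ((l.betaSet N).filter (fun x => x % 2 = 0)).card = 0 ∧
    l1.parts ((l.betaSet N).filter (fun x => x % 2 = 1)).card = 0 ∧
    l0.betaSet ((l.betaSet N).filter (fun x => x % 2 = 0)).card
      = ((l.betaSet N).filter (fun x => x % 2 = 0)).image (fun x => x / 2) ∧
    l1.betaSet ((l.betaSet N).filter (fun x => x % 2 = 1)).card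
      = ((l.betaSet N).filter (fun x => x % 2 = 1)).image (fun x => x / 2)

/-- `IsQuotRow k l f` : `f 0, …, f (2^k - 1)` is the `k`-th row of the 2-quotient
tower of `l`. -/
def IsQuotRow : ℕ → PartitionSeq → (ℕ → PartitionSeq) → Prop
  | 0, l, f => f 0 = l
  | k + 1, l, f => ∃ g : ℕ → PartitionSeq, IsQuotRow k l g ∧
      ∀ i < 2 ^ k, IsQuotient2 (g i) (f (2 * i)) (f (2 * i + 1))

/-- `DGood d l` : `|l| ≡ 2^d - 1 (mod 2^(d+1))` and the `2^d`-core of `l` is a hook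
partition. -/
def DGood (d : ℕ) (l : PartitionSeq) : Prop :=
  l.size % 2 ^ (d + 1) = 2 ^ d - 1 ∧
  ∃ c : PartitionSeq, IsECore (2 ^ d) l c ∧ c.IsHook

end PartitionSeq

open Finset

namespace PartitionSeq

/-! ### Beta-sets -/

@[ext]
theorem ext {a b : PartitionSeq} (h : a.parts = b.parts) : a = b := by
  cases a; cases b; simp_all

theorem parts_eq_zero_of_le {l : PartitionSeq} {N M : ℕ} (hNM : N ≤ M) (h0 : l.parts N = 0) :
    l.parts M = 0 :=
  Nat.eq_zero_of_le_zero (h0 ▸ l.antitone hNM)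

theorem strictAntiOn_bead (l : PartitionSeq) (N : ℕ) :
    StrictAntiOn (fun i => l.parts i + (N - 1 - i)) (Set.Iio N) := by
  intro i _ j hj hij
  have := l.antitone hij.le
  simp only [Set.mem_Iio] at hj
  show l.parts j + (N - 1 - j) < l.parts i + (N - 1 - i)
  omega

theorem card_betaSet (l : PartitionSeq) (N : ℕ) : #(l.betaSet N) = N := by
  rw [betaSet, card_image_of_injOn (by simpa using (strictAntiOn_bead l N).injOn), card_range]

theorem card_filter_lt_bead (l : PartitionSeq) {N i : ℕ} (hi : i < N) :
    #((l.betaSet N).filter (l.parts i + (N - 1 - i) < ·)) = i := by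
  have hanti := strictAntiOn_bead l N
  have : (l.betaSet N).filter (l.parts i + (N - 1 - i) < ·)
      = (range i).image (fun j => l.parts j + (N - 1 - j)) := by
    ext x
    simp only [betaSet, mem_filter, mem_image, mem_range]
    constructor
    · rintro ⟨⟨j, hj, rfl⟩, hlt⟩
      exact ⟨j, not_le.1 fun hij => hlt.not_ge (hanti.antitoneOn hi hj hij), rfl⟩
    · rintro ⟨j, hj, rfl⟩
      exact ⟨⟨j, hj.trans hi, rfl⟩, hanti (hj.trans hi) hi hj⟩
  have hsub : (range i : Set ℕ) ⊆ Set.Iio N := by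
    rw [coe_range]
    exact Set.Iio_subset_Iio hi.le
  rw [this, card_image_of_injOn (hanti.injOn.mono hsub), card_range]

theorem eq_of_betaSet_eq {a b : PartitionSeq} {N : ℕ} (ha : a.parts N = 0) (hb : b.parts N = 0)
    (h : a.betaSet N = b.betaSet N) : a = b := by
  ext i
  rcases lt_or_ge i N with hi | hi
  · have hmem : a.parts i + (N - 1 - i) ∈ b.betaSet N :=
      h ▸ mem_image_of_mem _ (mem_range.2 hi)
    obtain ⟨j, hj, hji⟩ : ∃ j < N, b.parts j + (N - 1 - j) = a.parts i + (N - 1 - i) := by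
      simpa [betaSet] using hmem
    have hij : j = i := by
      rw [← card_filter_lt_bead b hj, hji, ← h, card_filter_lt_bead a hi]
    subst hij
    omega
  · rw [parts_eq_zero_of_le hi ha, parts_eq_zero_of_le hi hb]

def HasBetaSet (p : PartitionSeq) (S : Finset ℕ) : Prop :=
  p.parts #S = 0 ∧ p.betaSet #S = S

theorem hasBetaSet_betaSet {l : PartitionSeq} {N : ℕ} (h0 : l.parts N = 0) :
    HasBetaSet l (l.betaSet N) := by
  rw [HasBetaSet, card_betaSet]
  exact ⟨h0, rfl⟩

theorem HasBetaSet.unique {p q : PartitionSeq} {S : Finset ℕ} (hp : HasBetaSet p S)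
    (hq : HasBetaSet q S) : p = q :=
  eq_of_betaSet_eq hp.1 hq.1 (hp.2.trans hq.2.symm)

theorem HasBetaSet.eq_of_card_eq {p : PartitionSeq} {S T : Finset ℕ} (hS : HasBetaSet p S)
    (hT : HasBetaSet p T) (hST : #S = #T) : S = T := by
  rw [← hS.2, ← hT.2, hST]

def cons (p : PartitionSeq) (m : ℕ) (hm : p.parts 0 ≤ m) : PartitionSeq where
  parts
    | 0 => m
    | i + 1 => p.parts i
  antitone := antitone_nat_of_succ_le fun
    | 0 => hm
    | i + 1 => p.antitone i.le_succ
  finite := let ⟨N, hN⟩ := p.finite; ⟨N + 1, hN⟩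

theorem exists_hasBetaSet (S : Finset ℕ) : ∃ p, HasBetaSet p S := by
  induction S using Finset.induction_on_max with
  | empty => exact ⟨⟨fun _ => 0, antitone_const, 0, rfl⟩, rfl, rfl⟩
  | insert m S hlt ih =>
    obtain ⟨p, hp0, hpS⟩ := ih
    have hm : p.parts 0 + #S ≤ m := by
      rcases Nat.eq_zero_or_pos #S with hS | hS
      · rw [hS] at hp0 ⊢
        omega
      · have hmem : p.parts 0 + (#S - 1 - 0) ∈ p.betaSet #S :=
          mem_image_of_mem _ (mem_range.2 hS)
        rw [hpS] at hmem
        have := hlt _ hmem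
        omega
    have hcard : #(insert m S) = #S + 1 :=
      card_insert_of_notMem fun hmS => (hlt m hmS).false
    refine ⟨cons p (m - #S) (by omega), ?_, ?_⟩
    · rw [hcard]
      exact hp0
    · rw [hcard, betaSet, range_add_one', image_insert, map_eq_image, image_image]
      conv_rhs => rw [← hpS]
      congr 1
      · show m - #S + (#S + 1 - 1 - 0) = m
        omega
      · refine image_congr fun i _ => ?_
        show p.parts i + (#S + 1 - 1 - (i + 1)) = p.parts i + (#S - 1 - i)
        omega

def addBead (S : Finset ℕ) : Finset ℕ := insert 0 (S.image (· + 1))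

theorem mem_addBead {S : Finset ℕ} {y : ℕ} :
    y ∈ addBead S ↔ y = 0 ∨ y ≠ 0 ∧ y - 1 ∈ S := by
  rw [addBead, mem_insert, mem_image]
  constructor
  · rintro (rfl | ⟨z, hz, rfl⟩)
    · exact Or.inl rfl
    · exact Or.inr ⟨z.succ_ne_zero, hz⟩
  · rintro (rfl | ⟨hy, hyS⟩)
    · exact Or.inl rfl
    · exact Or.inr ⟨y - 1, hyS, by omega⟩

theorem card_addBead (S : Finset ℕ) : #(addBead S) = #S + 1 := by
  rw [addBead, card_insert_of_notMem (by simp), card_image_of_injective _ (add_left_injective 1)]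

theorem betaSet_succ {l : PartitionSeq} {N : ℕ} (h0 : l.parts N = 0) :
    l.betaSet (N + 1) = addBead (l.betaSet N) := by
  ext x
  simp only [mem_addBead, betaSet, mem_image, mem_range]
  constructor
  · rintro ⟨i, hi, rfl⟩
    rcases Nat.lt_or_ge i N with hiN | hiN
    · exact Or.inr ⟨by omega, i, hiN, by omega⟩
    · obtain rfl : i = N := by omega
      simp [h0]
  · rintro (rfl | ⟨hx, i, hi, hix⟩)
    · exact ⟨N, N.lt_succ_self, by simp [h0]⟩
    · exact ⟨i, by omega, by omega⟩

theorem HasBetaSet.addBead {p : PartitionSeq} {S : Finset ℕ} (hp : HasBetaSet p S) :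
    HasBetaSet p (addBead S) := by
  rw [HasBetaSet, card_addBead, betaSet_succ hp.1, hp.2]
  exact ⟨parts_eq_zero_of_le (Nat.le_succ _) hp.1, rfl⟩

def IsBeadMove (S T : Finset ℕ) (h : ℕ) : Prop :=
  ∃ x ∈ S, h ≤ x ∧ x - h ∉ S ∧ T = insert (x - h) (S.erase x)

theorem IsBeadMove.pos {S T : Finset ℕ} {h : ℕ} (H : IsBeadMove S T h) : 0 < h := by
  obtain ⟨x, hx, -, hn, -⟩ := H
  exact Nat.pos_of_ne_zero fun h0 => hn (by simpa [h0] using hx)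

theorem IsBeadMove.card_eq {S T : Finset ℕ} {h : ℕ} (H : IsBeadMove S T h) : #T = #S := by
  obtain ⟨x, hx, -, hn, rfl⟩ := H
  rw [card_insert_of_notMem fun hm => hn (mem_of_mem_erase hm), card_erase_add_one hx]

theorem IsBeadMove.addBead {S T : Finset ℕ} {h : ℕ} (H : IsBeadMove S T h) :
    IsBeadMove (addBead S) (addBead T) h := by
  have hpos := H.pos
  obtain ⟨x, hx, hhx, hn, rfl⟩ := H
  refine ⟨x + 1, mem_addBead.2 (Or.inr ⟨by omega, by simpa using hx⟩), by omega, ?_, ?_⟩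
  · rw [mem_addBead]
    rintro (h0 | ⟨-, hm⟩)
    · omega
    · exact hn (by rwa [show x + 1 - h - 1 = x - h by omega] at hm)
  · ext y
    simp only [mem_addBead, mem_insert, mem_erase]
    rcases Nat.eq_zero_or_pos y with rfl | hy
    · omega
    · have e1 : y - 1 = x - h ↔ y = x + 1 - h := by omega
      have e2 : y - 1 ≠ x ↔ y ≠ x + 1 := by omega
      simp only [e1, e2, hy.ne', false_or, ne_eq, not_false_eq_true, true_and]

def RemoveHookAt (a b : PartitionSeq) (h N : ℕ) : Prop :=
  a.parts N = 0 ∧ b.parts N = 0 ∧ IsBeadMove (a.betaSet N) (b.betaSet N) h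

theorem RemoveHookAt.succ {a b : PartitionSeq} {h N : ℕ} (H : RemoveHookAt a b h N) :
    RemoveHookAt a b h (N + 1) := by
  obtain ⟨ha, hb, hmove⟩ := H
  refine ⟨parts_eq_zero_of_le N.le_succ ha, parts_eq_zero_of_le N.le_succ hb, ?_⟩
  rw [betaSet_succ ha, betaSet_succ hb]
  exact hmove.addBead

theorem RemoveHookAt.mono {a b : PartitionSeq} {h N M : ℕ} (hNM : N ≤ M)
    (H : RemoveHookAt a b h N) : RemoveHookAt a b h M :=
  Nat.le_induction H (fun _ _ ih => ih.succ) M hNM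

theorem removeHook_of_hasBetaSet {a b : PartitionSeq} {S T : Finset ℕ} {h : ℕ}
    (ha : HasBetaSet a S) (hb : HasBetaSet b T) (H : IsBeadMove S T h) : RemoveHook a b h := by
  refine ⟨#S, ha.1, H.card_eq ▸ hb.1, ?_⟩
  rw [ha.2, ← H.card_eq, hb.2]
  exact H

theorem size_eq_sum {l : PartitionSeq} {N : ℕ} (h0 : l.parts N = 0) :
    l.size = ∑ i ∈ range N, l.parts i := by
  refine finsum_eq_sum_of_support_subset _ fun i hi => ?_
  by_contra hiN
  simp only [coe_range, Set.mem_Iio, not_lt] at hiN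
  exact hi (parts_eq_zero_of_le hiN h0)

theorem sum_betaSet {l : PartitionSeq} {N : ℕ} (h0 : l.parts N = 0) :
    ∑ x ∈ l.betaSet N, x = l.size + ∑ i ∈ range N, i := by
  rw [betaSet, sum_image (by simpa using (strictAntiOn_bead l N).injOn), size_eq_sum h0,
    sum_add_distrib, sum_range_reflect (fun i => i) N]

theorem RemoveHookAt.size_eq {a b : PartitionSeq} {h N : ℕ} (H : RemoveHookAt a b h N) :
    a.size = b.size + h := by
  obtain ⟨ha, hb, x, hx, hhx, hn, hS⟩ := H
  have hsum := sum_betaSet hb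
  rw [hS, sum_insert fun hm => hn (mem_of_mem_erase hm)] at hsum
  have := sum_erase_add (a.betaSet N) (fun x => x) hx
  have := sum_betaSet ha
  omega

/-! ### The 2-abacus and the 2-quotient -/

def runner (S : Finset ℕ) (r : ℕ) : Finset ℕ := (S.filter (· % 2 = r)).image (· / 2)

theorem mem_runner {S : Finset ℕ} {r y : ℕ} (hr : r < 2) :
    y ∈ runner S r ↔ 2 * y + r ∈ S := by
  simp only [runner, mem_image, mem_filter]
  constructor
  · rintro ⟨x, ⟨hx, hxr⟩, rfl⟩
    rwa [← hxr, Nat.div_add_mod]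
  · intro hy
    exact ⟨2 * y + r, ⟨hy, by omega⟩, by omega⟩

theorem card_runner (S : Finset ℕ) (r : ℕ) : #(runner S r) = #(S.filter (· % 2 = r)) :=
  card_image_of_injOn fun x hx y hy hxy => by
    simp only [coe_filter, Set.mem_ofPred_eq] at hx hy
    have : x / 2 = y / 2 := hxy
    omega

theorem card_runner_zero_add_card_runner_one (S : Finset ℕ) :
    #(runner S 0) + #(runner S 1) = #S := by
  have : S.filter (· % 2 = 1) = S.filter (fun x => ¬ x % 2 = 0) :=
    filter_congr fun x _ => by omega
  rw [card_runner, card_runner, this, card_filter_add_card_filter_not]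

theorem ext_runner {S T : Finset ℕ} (h : ∀ r < 2, runner S r = runner T r) : S = T := by
  ext x
  have hx : 2 * (x / 2) + x % 2 = x := Nat.div_add_mod x 2
  have hr : x % 2 < 2 := Nat.mod_lt x two_pos
  rw [← hx, ← mem_runner hr, ← mem_runner hr, h _ hr]

theorem runner_addBead_addBead {S : Finset ℕ} {r : ℕ} (hr : r < 2) :
    runner (addBead (addBead S)) r = addBead (runner S r) := by
  ext y
  rw [mem_runner hr, mem_addBead, mem_addBead, mem_addBead, mem_runner hr]
  rcases Nat.eq_zero_or_pos y with rfl | hy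
  · omega
  · rw [show 2 * (y - 1) + r = 2 * y + r - 1 - 1 by omega]
    have h1 : 2 * y + r ≠ 0 := by omega
    have h2 : 2 * y + r - 1 ≠ 0 := by omega
    simp only [hy.ne', h1, h2, ne_eq, false_or, not_false_eq_true, true_and]

theorem runner_moveBead {S : Finset ℕ} {r x h : ℕ} (hr : r < 2) (hhx : 2 * h ≤ x) :
    runner (insert (x - 2 * h) (S.erase x)) r =
      if r = x % 2 then insert (x / 2 - h) ((runner S r).erase (x / 2)) else runner S r := by
  ext y
  split_ifs with hrx
  · simp only [mem_runner hr, mem_insert, mem_erase]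
    have e1 : 2 * y + r = x - 2 * h ↔ y = x / 2 - h := by omega
    have e2 : 2 * y + r ≠ x ↔ y ≠ x / 2 := by omega
    rw [e1, e2]
  · simp only [mem_runner hr, mem_insert, mem_erase]
    have e1 : 2 * y + r ≠ x - 2 * h := by omega
    have e2 : 2 * y + r ≠ x := by omega
    simp [e1, e2]

theorem isBeadMove_two_mul_iff {S T : Finset ℕ} {h : ℕ} :
    IsBeadMove S T (2 * h) ↔
      ∃ r < 2, IsBeadMove (runner S r) (runner T r) h ∧
        ∀ s < 2, s ≠ r → runner T s = runner S s := by
  constructor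
  · rintro ⟨x, hx, hhx, hn, rfl⟩
    have hr : x % 2 < 2 := Nat.mod_lt x two_pos
    refine ⟨x % 2, hr, ⟨x / 2, ?_, by omega, ?_, ?_⟩, fun s hs hsr => ?_⟩
    · rwa [mem_runner hr, Nat.div_add_mod]
    · rwa [mem_runner hr, show 2 * (x / 2 - h) + x % 2 = x - 2 * h by omega]
    · rw [runner_moveBead hr hhx, if_pos rfl]
    · rw [runner_moveBead hs hhx, if_neg hsr]
  · rintro ⟨r, hr, ⟨y, hy, hhy, hn, hT⟩, hothers⟩
    rw [mem_runner hr] at hy hn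
    refine ⟨2 * y + r, hy, by omega, by rwa [show 2 * y + r - 2 * h = 2 * (y - h) + r by omega],
      ext_runner fun s hs => ?_⟩
    rw [runner_moveBead hs (by omega), show (2 * y + r) % 2 = r by omega,
      show (2 * y + r) / 2 = y by omega]
    split_ifs with hsr
    · rw [hsr, hT]
    · exact hothers s hs hsr

theorem exists_parts_two_mul_eq_zero (l : PartitionSeq) : ∃ n, l.parts (2 * n) = 0 :=
  let ⟨N, hN⟩ := l.finite
  ⟨N, parts_eq_zero_of_le (by omega) hN⟩

noncomputable def beadBound (l : PartitionSeq) : ℕ :=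
  2 * Nat.find (exists_parts_two_mul_eq_zero l)

theorem parts_beadBound (l : PartitionSeq) : l.parts l.beadBound = 0 :=
  Nat.find_spec (exists_parts_two_mul_eq_zero l)

theorem even_beadBound (l : PartitionSeq) : Even l.beadBound :=
  even_two_mul _

theorem beadBound_le {l : PartitionSeq} {N : ℕ} (hN : Even N) (h0 : l.parts N = 0) :
    l.beadBound ≤ N := by
  obtain ⟨n, rfl⟩ := hN
  have := Nat.find_min' (exists_parts_two_mul_eq_zero l) (m := n) (by rwa [two_mul])
  rw [beadBound]
  omega

theorem exists_even_parts_eq_zero (a b : PartitionSeq) :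
    ∃ N, Even N ∧ a.parts N = 0 ∧ b.parts N = 0 :=
  ⟨a.beadBound + b.beadBound, a.even_beadBound.add b.even_beadBound,
    parts_eq_zero_of_le (Nat.le_add_right _ _) a.parts_beadBound,
    parts_eq_zero_of_le (Nat.le_add_left _ _) b.parts_beadBound⟩

theorem runner_betaSet_add_two {l : PartitionSeq} {N r : ℕ} (h0 : l.parts N = 0) (hr : r < 2) :
    runner (l.betaSet (N + 2)) r = addBead (runner (l.betaSet N) r) := by
  rw [betaSet_succ (parts_eq_zero_of_le N.le_succ h0), betaSet_succ h0,
    runner_addBead_addBead hr]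

theorem induction_even {l : PartitionSeq} {P : ℕ → Prop} (base : P l.beadBound)
    (step : ∀ N, l.parts N = 0 → P N → P (N + 2)) {N : ℕ} (hN : Even N)
    (h0 : l.parts N = 0) : P N := by
  obtain ⟨d, rfl⟩ := Nat.exists_eq_add_of_le (beadBound_le hN h0)
  obtain ⟨d, rfl⟩ : Even d := (Nat.even_add.1 hN).1 l.even_beadBound
  clear hN h0
  induction d with
  | zero => exact base
  | succ d ih =>
    rw [show l.beadBound + (d + 1 + (d + 1)) = l.beadBound + (d + d) + 2 by ring]
    exact step _ (parts_eq_zero_of_le (Nat.le_add_right _ _) l.parts_beadBound) ih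

noncomputable def charge (l : PartitionSeq) : ℤ :=
  #(runner (l.betaSet l.beadBound) 1) - #(runner (l.betaSet l.beadBound) 0)

theorem charge_eq_card_runner {l : PartitionSeq} {N : ℕ} (hN : Even N) (h0 : l.parts N = 0) :
    l.charge = #(runner (l.betaSet N) 1) - #(runner (l.betaSet N) 0) := by
  refine induction_even
    (P := fun N => l.charge = #(runner (l.betaSet N) 1) - #(runner (l.betaSet N) 0))
    rfl (fun M hM ih => ?_) hN h0
  rw [ih, runner_betaSet_add_two hM one_lt_two, runner_betaSet_add_two hM two_pos,
    card_addBead, card_addBead]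
  push_cast
  ring

theorem card_runner_eq_of_charge_eq {a b : PartitionSeq} (hc : a.charge = b.charge) {N r : ℕ}
    (hN : Even N) (ha : a.parts N = 0) (hb : b.parts N = 0) (hr : r < 2) :
    #(runner (a.betaSet N) r) = #(runner (b.betaSet N) r) := by
  have hca := charge_eq_card_runner hN ha
  have hcb := charge_eq_card_runner hN hb
  have hsa := card_runner_zero_add_card_runner_one (a.betaSet N)
  have hsb := card_runner_zero_add_card_runner_one (b.betaSet N)
  rw [card_betaSet] at hsa hsb
  interval_cases r <;> omega

theorem card_runner_betaSet_add_two_mul {l : PartitionSeq} {N r : ℕ} (h0 : l.parts N = 0)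
    (hr : r < 2) (d : ℕ) :
    #(runner (l.betaSet (N + 2 * d)) r) = #(runner (l.betaSet N) r) + d := by
  induction d with
  | zero => rfl
  | succ d ih =>
    rw [show N + 2 * (d + 1) = N + 2 * d + 2 by ring,
      runner_betaSet_add_two (parts_eq_zero_of_le (Nat.le_add_right _ _) h0) hr, card_addBead, ih]
    ring

noncomputable def quotPart (r : ℕ) (l : PartitionSeq) : PartitionSeq :=
  (exists_hasBetaSet (runner (l.betaSet l.beadBound) r)).choose

theorem hasBetaSet_quotPart {l : PartitionSeq} {N r : ℕ} (hr : r < 2) (hN : Even N)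
    (h0 : l.parts N = 0) : HasBetaSet (quotPart r l) (runner (l.betaSet N) r) := by
  refine induction_even (P := fun N => HasBetaSet (quotPart r l) (runner (l.betaSet N) r))
    (exists_hasBetaSet _).choose_spec (fun M hM ih => ?_) hN h0
  rw [runner_betaSet_add_two hM hr]
  exact ih.addBead

theorem isQuotient2_iff {l l0 l1 : PartitionSeq} :
    IsQuotient2 l l0 l1 ↔ l0 = quotPart 0 l ∧ l1 = quotPart 1 l := by
  constructor
  · rintro ⟨N, hN, h0, hp0, hp1, hb0, hb1⟩
    have h0' : HasBetaSet l0 (runner (l.betaSet N) 0) := by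
      rw [HasBetaSet, card_runner]
      exact ⟨hp0, hb0⟩
    have h1' : HasBetaSet l1 (runner (l.betaSet N) 1) := by
      rw [HasBetaSet, card_runner]
      exact ⟨hp1, hb1⟩
    exact ⟨h0'.unique (hasBetaSet_quotPart two_pos hN h0),
      h1'.unique (hasBetaSet_quotPart one_lt_two hN h0)⟩
  · rintro ⟨rfl, rfl⟩
    have h0 := hasBetaSet_quotPart two_pos l.even_beadBound l.parts_beadBound
    have h1 := hasBetaSet_quotPart one_lt_two l.even_beadBound l.parts_beadBound
    rw [HasBetaSet, card_runner] at h0 h1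
    exact ⟨_, l.even_beadBound, l.parts_beadBound, h0.1, h1.1, h0.2, h1.2⟩

theorem runner_eq_of_quotPart_eq {a b : PartitionSeq} (hc : a.charge = b.charge) {N r : ℕ}
    (hN : Even N) (ha : a.parts N = 0) (hb : b.parts N = 0) (hr : r < 2)
    (h : quotPart r a = quotPart r b) : runner (a.betaSet N) r = runner (b.betaSet N) r :=
  (hasBetaSet_quotPart hr hN ha).eq_of_card_eq (h ▸ hasBetaSet_quotPart hr hN hb)
    (card_runner_eq_of_charge_eq hc hN ha hb hr)

theorem eq_of_charge_eq_of_quotPart_eq {a b : PartitionSeq} (hc : a.charge = b.charge)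
    (h : ∀ r < 2, quotPart r a = quotPart r b) : a = b := by
  obtain ⟨N, hN, ha, hb⟩ := exists_even_parts_eq_zero a b
  exact eq_of_betaSet_eq ha hb
    (ext_runner fun r hr => runner_eq_of_quotPart_eq hc hN ha hb hr (h r hr))

theorem RemoveHook.exists_even {a b : PartitionSeq} {h : ℕ} (H : RemoveHook a b h) :
    ∃ N, Even N ∧ RemoveHookAt a b h N :=
  let ⟨N, hN⟩ := H
  ⟨2 * N, even_two_mul N, RemoveHookAt.mono (by omega) hN⟩

theorem RemoveHook.charge_eq {a b : PartitionSeq} {h : ℕ} (H : RemoveHook a b (2 * h)) :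
    a.charge = b.charge := by
  obtain ⟨N, hN, ha, hb, hmove⟩ := H.exists_even
  obtain ⟨r, -, hmove_r, hothers⟩ := isBeadMove_two_mul_iff.1 hmove
  have hcard : ∀ s < 2, #(runner (b.betaSet N) s) = #(runner (a.betaSet N) s) := fun s hs => by
    rcases eq_or_ne s r with rfl | hsr
    · exact hmove_r.card_eq
    · rw [hothers s hs hsr]
  rw [charge_eq_card_runner hN ha, charge_eq_card_runner hN hb, hcard 0 two_pos,
    hcard 1 one_lt_two]

theorem RemoveHook.exists_quotPart {a b : PartitionSeq} {h : ℕ} (H : RemoveHook a b (2 * h)) :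
    ∃ r < 2, RemoveHook (quotPart r a) (quotPart r b) h ∧
      ∀ s < 2, s ≠ r → quotPart s b = quotPart s a := by
  obtain ⟨N, hN, ha, hb, hmove⟩ := H.exists_even
  obtain ⟨r, hr, hmove_r, hothers⟩ := isBeadMove_two_mul_iff.1 hmove
  refine ⟨r, hr, removeHook_of_hasBetaSet (hasBetaSet_quotPart hr hN ha)
    (hasBetaSet_quotPart hr hN hb) hmove_r, fun s hs hsr => ?_⟩
  have hbs := hasBetaSet_quotPart hs hN hb
  rw [hothers s hs hsr] at hbs
  exact hbs.unique (hasBetaSet_quotPart hs hN ha)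

theorem removeHook_of_quotPart {a b : PartitionSeq} {h r : ℕ} (hc : a.charge = b.charge)
    (hr : r < 2) (H : RemoveHook (quotPart r a) (quotPart r b) h)
    (hothers : ∀ s < 2, s ≠ r → quotPart s b = quotPart s a) : RemoveHook a b (2 * h) := by
  obtain ⟨M, HM⟩ : ∃ M, RemoveHookAt (quotPart r a) (quotPart r b) h M := H
  obtain ⟨N₀, hN₀, ha₀, hb₀⟩ := exists_even_parts_eq_zero a b
  -- enough beads for runner `r` to carry at least `M` of them
  set N := N₀ + 2 * M
  have hN : Even N := hN₀.add (even_two_mul M)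
  have ha : a.parts N = 0 := parts_eq_zero_of_le (Nat.le_add_right _ _) ha₀
  have hb : b.parts N = 0 := parts_eq_zero_of_le (Nat.le_add_right _ _) hb₀
  have hM : M ≤ #(runner (a.betaSet N) r) := by
    rw [card_runner_betaSet_add_two_mul ha₀ hr]
    exact Nat.le_add_left _ _
  have hA := hasBetaSet_quotPart hr hN ha
  have hB : (quotPart r b).betaSet #(runner (a.betaSet N) r) = runner (b.betaSet N) r := by
    rw [card_runner_eq_of_charge_eq hc hN ha hb hr]
    exact (hasBetaSet_quotPart hr hN hb).2
  obtain ⟨-, -, hmove_r⟩ := HM.mono hM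
  rw [hA.2, hB] at hmove_r
  refine ⟨N, ha, hb, isBeadMove_two_mul_iff.2 ⟨r, hr, hmove_r, fun s hs hsr => ?_⟩⟩
  exact (runner_eq_of_quotPart_eq hc hN ha hb hs (hothers s hs hsr).symm).symm

/-! ### 2-cores -/

theorem mem_runner_of_succ_mem {c : PartitionSeq} (hc : ∀ b, ¬RemoveHook c b 2) {N r y : ℕ}
    (h0 : c.parts N = 0) (hr : r < 2) (hy : y + 1 ∈ runner (c.betaSet N) r) :
    y ∈ runner (c.betaSet N) r := by
  rw [mem_runner hr] at hy ⊢
  by_contra hn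
  set x := 2 * (y + 1) + r
  obtain ⟨b, hb⟩ := exists_hasBetaSet (insert (x - 2) ((c.betaSet N).erase x))
  exact hc b (removeHook_of_hasBetaSet (hasBetaSet_betaSet h0) hb
    ⟨x, hy, by omega, by rwa [show x - 2 = 2 * y + r by omega], rfl⟩)

theorem eq_range_card_of_forall_succ_mem {U : Finset ℕ} (h : ∀ y, y + 1 ∈ U → y ∈ U) :
    U = range #U := by
  have hle : ∀ y ∈ U, ∀ z ≤ y, z ∈ U := fun y hy z hzy => by
    induction y, hzy using Nat.le_induction with
    | base => exact hy
    | succ n _ ih => exact ih (h n hy)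
  ext y
  rw [mem_range]
  constructor
  · intro hy
    calc y < #(range (y + 1)) := by simp
      _ ≤ #U := card_le_card fun z hz => hle y hy z (Nat.lt_succ_iff.1 (mem_range.1 hz))
  · intro hy
    by_contra hn
    have hsub : U ⊆ range y := fun z hz => mem_range.2 (not_le.1 fun hyz => hn (hle z hz y hyz))
    exact (card_le_card hsub).not_gt (by simpa using hy)

theorem eq_of_not_removeHook_two {a b : PartitionSeq} (ha : ∀ c, ¬RemoveHook a c 2)
    (hb : ∀ c, ¬RemoveHook b c 2) (hc : a.charge = b.charge) : a = b := by
  obtain ⟨N, hN, ha0, hb0⟩ := exists_even_parts_eq_zero a b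
  refine eq_of_betaSet_eq ha0 hb0 (ext_runner fun r hr => ?_)
  rw [eq_range_card_of_forall_succ_mem fun y => mem_runner_of_succ_mem ha ha0 hr,
    eq_range_card_of_forall_succ_mem fun y => mem_runner_of_succ_mem hb hb0 hr,
    card_runner_eq_of_charge_eq hc hN ha0 hb0 hr]

theorem exists_isECore_two (a : PartitionSeq) : ∃ c, IsECore 2 a c := by
  induction hn : a.size using Nat.strong_induction_on generalizing a with
  | _ n ih =>
    by_cases h : ∃ b, RemoveHook a b 2
    · obtain ⟨b, hb⟩ := h
      obtain ⟨N, hN⟩ : ∃ N, RemoveHookAt a b 2 N := id hb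
      obtain ⟨c, hbc, hc⟩ := ih b.size (by have := hN.size_eq; omega) b rfl
      exact ⟨c, .head hb hbc, hc⟩
    · exact ⟨a, .refl, fun b hb => h ⟨b, hb⟩⟩

theorem IsECore.charge_eq {a c : PartitionSeq} (H : IsECore 2 a c) : a.charge = c.charge := by
  obtain ⟨hchain, -⟩ := H
  induction hchain with
  | refl => rfl
  | tail _ hstep ih => exact ih.trans (RemoveHook.charge_eq (h := 1) hstep)

theorem isECore_two_imp_iff {a b : PartitionSeq} :
    (∀ c, IsECore 2 a c → IsECore 2 b c) ↔ a.charge = b.charge := by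
  constructor
  · intro h
    obtain ⟨c, hc⟩ := exists_isECore_two a
    exact hc.charge_eq.trans (h c hc).charge_eq.symm
  · intro hab c hc
    obtain ⟨c', hc'⟩ := exists_isECore_two b
    rwa [← eq_of_not_removeHook_two hc'.2 hc.2
      (hc'.charge_eq.symm.trans (hab.symm.trans hc.charge_eq))]

/-! ### The 2-quotient tower -/

noncomputable def quotRow : ℕ → PartitionSeq → ℕ → PartitionSeq
  | 0, l => fun _ => l
  | k + 1, l => fun j => quotPart (j % 2) (quotRow k l (j / 2))

theorem quotRow_succ_two_mul_add {k : ℕ} {l : PartitionSeq} {i s : ℕ} (hs : s < 2) :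
    quotRow (k + 1) l (2 * i + s) = quotPart s (quotRow k l i) := by
  simp only [quotRow]
  congr 2 <;> omega

theorem isQuotRow_iff {k : ℕ} {l : PartitionSeq} {f : ℕ → PartitionSeq} :
    IsQuotRow k l f ↔ ∀ i < 2 ^ k, f i = quotRow k l i := by
  induction k generalizing f with
  | zero =>
    refine ⟨fun h i hi => ?_, fun h => h 0 one_pos⟩
    obtain rfl : i = 0 := by simpa using hi
    exact h
  | succ k ih =>
    simp only [IsQuotRow, ih, isQuotient2_iff]
    constructor
    · rintro ⟨g, hg, hq⟩ j hj
      have hi : j / 2 < 2 ^ k := by rw [pow_succ] at hj; omega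
      obtain ⟨h0, h1⟩ := hq (j / 2) hi
      rw [hg _ hi] at h0 h1
      rcases Nat.mod_two_eq_zero_or_one j with hj2 | hj2
      · rw [show j = 2 * (j / 2) + 0 by omega, quotRow_succ_two_mul_add two_pos]
        exact h0
      · rw [show j = 2 * (j / 2) + 1 by omega, quotRow_succ_two_mul_add one_lt_two]
        exact h1
    · intro hf
      have hk := pow_succ 2 k
      refine ⟨quotRow k l, fun _ _ => rfl, fun i hi => ⟨?_, ?_⟩⟩
      · rw [hf _ (by omega), ← quotRow_succ_two_mul_add two_pos, add_zero]
      · rw [hf _ (by omega), ← quotRow_succ_two_mul_add one_lt_two]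

theorem isQuotRow_quotRow (k : ℕ) (l : PartitionSeq) : IsQuotRow k l (quotRow k l) :=
  isQuotRow_iff.2 fun _ _ => rfl

theorem RemoveHook.exists_quotRow {m l : PartitionSeq} {k h : ℕ}
    (H : RemoveHook m l (2 ^ k * h)) :
    ∃ i < 2 ^ k, RemoveHook (quotRow k m i) (quotRow k l i) h ∧
      ∀ j < 2 ^ k, j ≠ i → quotRow k l j = quotRow k m j := by
  induction k generalizing h with
  | zero =>
    refine ⟨0, one_pos, by simpa [quotRow] using H, fun j hj hj0 => ?_⟩
    exact absurd (by simpa using hj) hj0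
  | succ k ih =>
    rw [pow_succ, mul_assoc] at H
    obtain ⟨i, hi, hR, hothers⟩ := ih H
    obtain ⟨r, hr, hR', hothers'⟩ := hR.exists_quotPart
    have hk := pow_succ 2 k
    refine ⟨2 * i + r, by omega, ?_, fun j hj hji => ?_⟩
    · rwa [quotRow_succ_two_mul_add hr, quotRow_succ_two_mul_add hr]
    · show quotPart (j % 2) (quotRow k l (j / 2)) = quotPart (j % 2) (quotRow k m (j / 2))
      by_cases hj2 : j / 2 = i
      · rw [hj2]
        exact hothers' _ (Nat.mod_lt j two_pos) (by omega)
      · rw [hothers _ (by omega) hj2]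

theorem RemoveHook.charge_quotRow_eq {m l : PartitionSeq} {k h j i : ℕ}
    (H : RemoveHook m l (2 ^ k * h)) (hj : j < k) (hi : i < 2 ^ j) :
    (quotRow j m i).charge = (quotRow j l i).charge := by
  rw [show 2 ^ k * h = 2 ^ j * (2 * (2 ^ (k - j - 1) * h)) by
    rw [← mul_assoc, ← mul_assoc, ← pow_succ, ← pow_add]; congr 2; omega] at H
  obtain ⟨i₀, -, hR, hothers⟩ := H.exists_quotRow
  by_cases hii : i = i₀
  · exact hii ▸ hR.charge_eq
  · rw [hothers i hi hii]

theorem removeHook_of_quotRow {m l : PartitionSeq} {k h i : ℕ}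
    (hc : ∀ j < k, ∀ i < 2 ^ j, (quotRow j m i).charge = (quotRow j l i).charge)
    (hi : i < 2 ^ k) (H : RemoveHook (quotRow k m i) (quotRow k l i) h)
    (hothers : ∀ j < 2 ^ k, j ≠ i → quotRow k l j = quotRow k m j) :
    RemoveHook m l (2 ^ k * h) := by
  induction k generalizing h i with
  | zero =>
    obtain rfl : i = 0 := by simpa using hi
    simpa [quotRow] using H
  | succ k ih =>
    have hk := pow_succ 2 k
    have hquot : ∀ {j s}, j < 2 ^ k → s < 2 → 2 * j + s ≠ i →
        quotPart s (quotRow k l j) = quotPart s (quotRow k m j) := fun hj hs hne => by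
      rw [← quotRow_succ_two_mul_add hs, ← quotRow_succ_two_mul_add hs]
      exact hothers _ (by omega) hne
    rw [pow_succ, mul_assoc]
    refine ih (fun j hj => hc j (by omega)) (i := i / 2) (by omega) ?_ fun j hj hji => ?_
    · exact removeHook_of_quotPart (hc k k.lt_succ_self _ (by omega)) (Nat.mod_lt i two_pos) H
        fun s hs hsi => hquot (by omega) hs (by omega)
    · exact eq_of_charge_eq_of_quotPart_eq (hc k k.lt_succ_self j hj).symm
        fun s hs => hquot hj hs (by omega)

end PartitionSeq

open PartitionSeq

theorem stmt_8_general (k : ℕ) (l m : PartitionSeq) :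
    RemoveHook m l (2 ^ k) ↔
      ∃ g f : ℕ → PartitionSeq, IsQuotRow k m g ∧ IsQuotRow k l f ∧
        (∀ j < k, ∀ gj fj : ℕ → PartitionSeq, IsQuotRow j m gj → IsQuotRow j l fj →
          ∀ i < 2 ^ j, ∀ c : PartitionSeq, IsECore 2 (gj i) c → IsECore 2 (fj i) c) ∧
        ∃ i < 2 ^ k, RemoveHook (g i) (f i) 1 ∧
          ∀ j < 2 ^ k, j ≠ i → f j = g j := by
  constructor
  · intro H
    replace H : RemoveHook m l (2 ^ k * 1) := by rwa [mul_one]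
    obtain ⟨i, hi, hR, hothers⟩ := H.exists_quotRow
    refine ⟨quotRow k m, quotRow k l, isQuotRow_quotRow k m, isQuotRow_quotRow k l,
      fun j hj gj fj hgj hfj i hi => ?_, i, hi, hR, hothers⟩
    rw [isQuotRow_iff.1 hgj i hi, isQuotRow_iff.1 hfj i hi, isECore_two_imp_iff]
    exact H.charge_quotRow_eq hj hi
  · rintro ⟨g, f, hg, hf, hcore, i, hi, hR, hothers⟩
    rw [isQuotRow_iff] at hg hf
    rw [← mul_one (2 ^ k)]
    refine removeHook_of_quotRow (fun j hj i hi => isECore_two_imp_iff.1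
      (hcore j hj _ _ (isQuotRow_quotRow j m) (isQuotRow_quotRow j l) i hi)) hi
      (hg i hi ▸ hf i hi ▸ hR) fun j hj hji => ?_
    rw [← hg j hj, ← hf j hj]
    exact hothers j hj hji

theorem stmt_8 (n k : ℕ) (hk : 2 ^ k ≤ n) (l m : PartitionSeq)
    (hm : m.size = n) (hl : l.size = n - 2 ^ k) :
    RemoveHook m l (2 ^ k) ↔
      ∃ g f : ℕ → PartitionSeq, IsQuotRow k m g ∧ IsQuotRow k l f ∧
        (∀ j < k, ∀ gj fj : ℕ → PartitionSeq, IsQuotRow j m gj → IsQuotRow j l fj →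
          ∀ i < 2 ^ j, ∀ c : PartitionSeq, IsECore 2 (gj i) c → IsECore 2 (fj i) c) ∧
        ∃ i < 2 ^ k, RemoveHook (g i) (f i) 1 ∧
          ∀ j < 2 ^ k, j ≠ i → f j = g j :=
  stmt_8_general k l m
end

section
/- Let λ be a partition of n and k ≥ 0, with k-th row of the 2-quotient tower (λ_0^{(k)},...,λ_{2^k−1}^{(k)}). Then λ is odd if and only if: (i) for all j < k the total size of the partitions in the j-th row of the 2-core tower is at most 1; (ii) each λ_i^{(k)} is an odd partition; and (iii) the sizes |λ_i^{(k)}| are pairwise 2-disjoint. In that case Σ_i |λ_i^{(k)}| = ⌊n/2^k⌋. -/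
/-!
Encode a partition of `n` by a beta-set `B` (its first-column hook lengths). The two runners
`B₀, B₁` of `B` (its even and its odd beads, halved) encode the 2-quotient, of sizes `w₀, w₁`, and
the hooks of even length `2m` of `B` are exactly the hooks of length `m` of `B₀` and of `B₁`. By
Legendre's formula the hook length formula then gives
`ν₂(∏ hooks of B) = w₀ + w₁ + ν₂(∏ hooks of B₀) + ν₂(∏ hooks of B₁)`, whereas
`ν₂(n!) = ⌊n/2⌋ + ν₂(⌊n/2⌋!) ≥ w₀ + w₁ + ν₂(w₀!) + ν₂(w₁!)`, with equality iff
`⌊n/2⌋ = w₀ + w₁` and `w₀, w₁` are 2-disjoint (Kummer). As the 2-core has size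
`n - 2(w₀ + w₁)`, `λ` is odd iff its 2-core has size at most 1, both quotient partitions are odd
and their sizes are 2-disjoint. Applying this to every node of a row of the 2-quotient tower and
collecting the disjointness conditions gives the theorem by induction on `k`; the sizes in each
row add up to half of those in the previous row, rounded down.
-/

/-- A partition, given by its weakly decreasing sequence of parts (eventually zero). -/
structure OldPartition where
  parts : ℕ → ℕ
  antitone : Antitone parts
  finite : ∃ N, parts N = 0

namespace OldPartition

/-- The size `|λ|` of a partition: the sum of its parts. -/
noncomputable def size (l : OldPartition) : ℕ := ∑ᶠ i, l.parts i

/-- The parts of the conjugate partition. -/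
noncomputable def conjParts (l : OldPartition) (j : ℕ) : ℕ := Nat.card {i : ℕ | j < l.parts i}

/-- The hook length of the cell `(i,j)` (0-indexed) of a partition. -/
noncomputable def hookLength (l : OldPartition) (i j : ℕ) : ℕ :=
  (l.parts i - j) + (l.conjParts j - i) - 1

/-- The degree of the irreducible character of the symmetric group labelled by `l`,
via the hook length formula. -/
noncomputable def degree (l : OldPartition) : ℕ :=
  (l.size).factorial / ∏ᶠ (p : ℕ × ℕ) (_ : p.2 < l.parts p.1), l.hookLength p.1 p.2

/-- A partition is odd if the corresponding irreducible character of the symmetric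
group has odd degree. -/
noncomputable def IsOdd (l : OldPartition) : Prop := Odd l.degree

/-- A hook partition: all parts beyond the first are at most 1. -/
def IsHook (l : OldPartition) : Prop := ∀ i, 1 ≤ i → l.parts i ≤ 1

/-- The beta-set (set of first-column hook lengths) of `l` computed with `N` beads. -/
def betaSet (l : OldPartition) (N : ℕ) : Finset ℕ :=
  (Finset.range N).image (fun i => l.parts i + (N - 1 - i))

/-- `RemoveHook l m h` : `m` is obtained from `l` by removing a hook of length `h`,
expressed via beta-sets. -/
def RemoveHook (l m : OldPartition) (h : ℕ) : Prop :=
  ∃ N, l.parts N = 0 ∧ m.parts N = 0 ∧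
    ∃ x ∈ l.betaSet N, h ≤ x ∧ x - h ∉ l.betaSet N ∧
      m.betaSet N = insert (x - h) ((l.betaSet N).erase x)

/-- `IsECore e l c` : `c` is the `e`-core of `l`, i.e. it is obtained from `l` by
successively removing `e`-hooks and has no `e`-hook. -/
def IsECore (e : ℕ) (l c : OldPartition) : Prop :=
  Relation.ReflTransGen (fun a b => RemoveHook a b e) l c ∧ ∀ b, ¬ RemoveHook c b e

/-- `IsQuotient2 l l0 l1` : `(l0, l1)` is the 2-quotient of `l`, via the parity
splitting of a beta-set with an even number of beads. -/
def IsQuotient2 (l l0 l1 : OldPartition) : Prop :=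
  ∃ N, Even N ∧ l.parts N = 0 ∧
    l0.parts ((l.betaSet N).filter (fun x => x % 2 = 0)).card = 0 ∧
    l1.parts ((l.betaSet N).filter (fun x => x % 2 = 1)).card = 0 ∧
    l0.betaSet ((l.betaSet N).filter (fun x => x % 2 = 0)).card
      = ((l.betaSet N).filter (fun x => x % 2 = 0)).image (fun x => x / 2) ∧
    l1.betaSet ((l.betaSet N).filter (fun x => x % 2 = 1)).card
      = ((l.betaSet N).filter (fun x => x % 2 = 1)).image (fun x => x / 2)

/-- `IsQuotRow k l f` : `f 0, …, f (2^k - 1)` is the `k`-th row of the 2-quotient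
tower of `l`. -/
def IsQuotRow : ℕ → OldPartition → (ℕ → OldPartition) → Prop
  | 0, l, f => f 0 = l
  | k + 1, l, f => ∃ g : ℕ → OldPartition, IsQuotRow k l g ∧
      ∀ i < 2 ^ k, IsQuotient2 (g i) (f (2 * i)) (f (2 * i + 1))

/-- `DGood d l` : `|l| ≡ 2^d - 1 (mod 2^(d+1))` and the `2^d`-core of `l` is a hook
partition. -/
def DGood (d : ℕ) (l : OldPartition) : Prop :=
  l.size % 2 ^ (d + 1) = 2 ^ d - 1 ∧
  ∃ c : OldPartition, IsECore (2 ^ d) l c ∧ c.IsHook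

end OldPartition

open scoped Nat

namespace Nat

theorem and_eq_zero_iff_mod_two_div_two {a b : ℕ} :
    a &&& b = 0 ↔ ¬(a % 2 = 1 ∧ b % 2 = 1) ∧ a / 2 &&& b / 2 = 0 := by
  rw [← and_mod_two_eq_one, ← and_div_two]
  omega

theorem add_eq_or_of_and_eq_zero {a b : ℕ} (h : a &&& b = 0) : a + b = a ||| b := by
  induction a using Nat.strong_induction_on generalizing b with
  | _ a ih =>
    rcases Nat.eq_zero_or_pos a with rfl | ha
    · simp
    rw [and_eq_zero_iff_mod_two_div_two] at h
    have hdiv : (a ||| b) / 2 = a / 2 + b / 2 := by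
      rw [or_div_two, ih (a / 2) (by omega) h.2]
    have hmod := (or_mod_two_eq_one (a := a) (b := b))
    omega

theorem add_and_eq_zero_iff {a b m : ℕ} (hab : a &&& b = 0) :
    (a + b) &&& m = 0 ↔ a &&& m = 0 ∧ b &&& m = 0 := by
  rw [add_eq_or_of_and_eq_zero hab, and_or_distrib_right, or_eq_zero_iff]

theorem and_add_eq_zero_iff {a b c : ℕ} (hbc : b &&& c = 0) :
    a &&& (b + c) = 0 ↔ a &&& b = 0 ∧ a &&& c = 0 := by
  rw [Nat.and_comm, add_and_eq_zero_iff hbc, Nat.and_comm b, Nat.and_comm c]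

theorem factorization_two_factorial (m : ℕ) :
    (m)!.factorization 2 = m / 2 + (m / 2)!.factorization 2 := by
  rcases m.even_or_odd' with ⟨n, rfl | rfl⟩
  · rw [show 2 * n / 2 = n by omega, factorization_factorial_mul prime_two]
    omega
  · rw [show (2 * n + 1) / 2 = n by omega, factorial_succ,
      factorization_mul (by omega) (factorial_ne_zero _), Finsupp.add_apply,
      factorization_eq_zero_of_not_dvd (by omega), factorization_factorial_mul prime_two]
    omega

theorem factorization_factorial_mono (p : ℕ) {a b : ℕ} (h : a ≤ b) :
    (a)!.factorization p ≤ (b)!.factorization p :=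
  (factorization_le_iff_dvd (factorial_ne_zero a) (factorial_ne_zero b)).2
    (factorial_dvd_factorial h) p

theorem factorization_factorial_add_le (p a b : ℕ) :
    (a)!.factorization p + (b)!.factorization p ≤ (a + b)!.factorization p := by
  have h := (factorization_le_iff_dvd (by positivity) (factorial_ne_zero (a + b))).2
    (factorial_mul_factorial_dvd_factorial_add a b) p
  rwa [factorization_mul (factorial_ne_zero a) (factorial_ne_zero b), Finsupp.add_apply] at h

/-- Kummer's theorem at `p = 2`: adding `a` and `b` in binary involves no carry. -/
theorem factorization_two_factorial_add_eq_iff (a b : ℕ) :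
    (a + b)!.factorization 2 = (a)!.factorization 2 + (b)!.factorization 2 ↔ a &&& b = 0 := by
  induction h : a + b using Nat.strong_induction_on generalizing a b with
  | _ n ih =>
    subst h
    rcases Nat.eq_zero_or_pos (a + b) with hab | hab
    · obtain ⟨rfl, rfl⟩ : a = 0 ∧ b = 0 := by omega
      simp
    have hsa := factorization_two_factorial a
    have hsb := factorization_two_factorial b
    have hsab := factorization_two_factorial (a + b)
    rw [and_eq_zero_iff_mod_two_div_two]
    by_cases hodd : a % 2 = 1 ∧ b % 2 = 1
    · have hmono := factorization_factorial_mono 2 (Nat.le_add_right (a / 2 + b / 2) 1)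
      have hadd := factorization_factorial_add_le 2 (a / 2) (b / 2)
      rw [show (a + b) / 2 = a / 2 + b / 2 + 1 by omega] at hsab
      exact iff_of_false (by omega) (fun h => h.1 hodd)
    · rw [show (a + b) / 2 = a / 2 + b / 2 by omega] at hsab
      rw [← ih _ (by omega) (a / 2) (b / 2) rfl]
      omega

theorem odd_div_iff_factorization_two_eq {d n : ℕ} (hn : n ≠ 0) (h : d ∣ n) :
    Odd (n / d) ↔ n.factorization 2 = d.factorization 2 := by
  have hd : d ≠ 0 := by rintro rfl; exact hn (zero_dvd_iff.1 h)
  have hq : n / d ≠ 0 := (Nat.div_pos (Nat.le_of_dvd (by omega) h) (by omega)).ne'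
  have hle := (Nat.factorization_le_iff_dvd hd hn).2 h 2
  rw [Nat.odd_iff, ← Nat.two_dvd_ne_zero, Nat.prime_two.dvd_iff_one_le_factorization hq,
    Nat.factorization_div h, Finsupp.tsub_apply]
  omega

theorem choose_two_succ (n : ℕ) : (n + 1).choose 2 = n.choose 2 + n := by
  rw [choose_succ_succ', choose_one_right, add_comm]

theorem forall_lt_two_mul_iff {n : ℕ} {p : ℕ → Prop} :
    (∀ i < 2 * n, p i) ↔ ∀ i < n, p (2 * i) ∧ p (2 * i + 1) := by
  refine ⟨fun h i hi => ⟨h _ (by omega), h _ (by omega)⟩, fun h i hi => ?_⟩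
  obtain ⟨m, rfl | rfl⟩ := even_or_odd' i
  · exact (h m (by omega)).1
  · exact (h m (by omega)).2

end Nat

theorem Finset.sum_range_two_mul {M : Type*} [AddCommMonoid M] (f : ℕ → M) (n : ℕ) :
    ∑ i ∈ range (2 * n), f i = ∑ i ∈ range n, (f (2 * i) + f (2 * i + 1)) := by
  induction n with
  | zero => simp
  | succ n ih => rw [mul_add_one, sum_range_succ, sum_range_succ, sum_range_succ, ih, add_assoc]

section PairwiseBitDisjoint

open Finset

def PairwiseBitDisjoint (n : ℕ) (a : ℕ → ℕ) : Prop :=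
  ∀ i < n, ∀ j < n, i ≠ j → a i &&& a j = 0

theorem pairwiseBitDisjoint_two_mul_iff {n : ℕ} {a : ℕ → ℕ} :
    PairwiseBitDisjoint (2 * n) a ↔ (∀ i < n, a (2 * i) &&& a (2 * i + 1) = 0)
      ∧ PairwiseBitDisjoint n fun i => a (2 * i) + a (2 * i + 1) := by
  constructor
  · intro h
    have hsib : ∀ i < n, a (2 * i) &&& a (2 * i + 1) = 0 := fun i hi =>
      h _ (by omega) _ (by omega) (by omega)
    refine ⟨hsib, fun i hi j hj hij => ?_⟩
    rw [Nat.add_and_eq_zero_iff (hsib i hi), Nat.and_add_eq_zero_iff (hsib j hj),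
      Nat.and_add_eq_zero_iff (hsib j hj)]
    exact ⟨⟨h _ (by omega) _ (by omega) (by omega), h _ (by omega) _ (by omega) (by omega)⟩,
      h _ (by omega) _ (by omega) (by omega), h _ (by omega) _ (by omega) (by omega)⟩
  · rintro ⟨hsib, hs⟩ i hi j hj hij
    have hpart : ∀ i < 2 * n, ∀ m, (a (2 * (i / 2)) + a (2 * (i / 2) + 1)) &&& m = 0 →
        a i &&& m = 0 := by
      intro i hi m hm
      rw [Nat.add_and_eq_zero_iff (hsib _ (by omega))] at hm
      rcases Nat.mod_two_eq_zero_or_one i with h | h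
      · rw [show 2 * (i / 2) = i by omega] at hm
        exact hm.1
      · rw [show 2 * (i / 2) + 1 = i by omega] at hm
        exact hm.2
    by_cases hp : i / 2 = j / 2
    · have := hsib (i / 2) (by omega)
      rcases Nat.mod_two_eq_zero_or_one i with h | h
      · rwa [show 2 * (i / 2) = i by omega, show i + 1 = j by omega] at this
      · rwa [show 2 * (i / 2) = j by omega, show j + 1 = i by omega, Nat.and_comm] at this
    · refine hpart i hi _ ?_
      rw [Nat.and_comm]
      exact hpart j hj _ (hs _ (by omega) _ (by omega) (Ne.symm hp))

theorem pairwiseBitDisjoint_iff_of_eq_add_two_mul {n : ℕ} {a c s : ℕ → ℕ}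
    (hc : ∀ i < n, c i ≤ 1) (ha : ∀ i < n, a i = c i + 2 * s i) :
    PairwiseBitDisjoint n a ↔ ∑ i ∈ range n, c i ≤ 1 ∧ PairwiseBitDisjoint n s := by
  have hpair : ∀ i < n, ∀ j < n,
      a i &&& a j = 0 ↔ ¬(c i = 1 ∧ c j = 1) ∧ s i &&& s j = 0 := by
    intro i hi j hj
    have := hc i hi
    have := hc j hj
    rw [Nat.and_eq_zero_iff_mod_two_div_two, ha i hi, ha j hj,
      show (c i + 2 * s i) % 2 = c i by omega, show (c i + 2 * s i) / 2 = s i by omega,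
      show (c j + 2 * s j) % 2 = c j by omega, show (c j + 2 * s j) / 2 = s j by omega]
  have hsum : ∑ i ∈ range n, c i ≤ 1 ↔ ∀ i < n, ∀ j < n, i ≠ j → ¬(c i = 1 ∧ c j = 1) := by
    rw [sum_le_one_iff]
    refine ⟨fun h i hi j hj hij hij1 => hij (h i j (mem_range.2 hi) (mem_range.2 hj)
      (by omega) (by omega)).1, fun h i j hi hj hci hcj => ?_⟩
    have := hc i (mem_range.1 hi)
    have := hc j (mem_range.1 hj)
    refine ⟨by_contra fun hij => h i (mem_range.1 hi) j (mem_range.1 hj) hij ?_, by omega⟩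
    omega
  rw [hsum]
  refine ⟨fun h => ⟨fun i hi j hj hij => ((hpair i hi j hj).1 (h i hi j hj hij)).1,
    fun i hi j hj hij => ((hpair i hi j hj).1 (h i hi j hj hij)).2⟩,
    fun ⟨h₁, h₂⟩ i hi j hj hij => (hpair i hi j hj).2 ⟨h₁ i hi j hj hij, h₂ i hi j hj hij⟩⟩

end PairwiseBitDisjoint

namespace BetaSet

open Finset

/-- The size of the partition whose beta-set is `B`. -/
def weight (B : Finset ℕ) : ℕ := (∑ x ∈ B, x) - (#B).choose 2

theorem card_filter_lt_le (B : Finset ℕ) (x : ℕ) : #{y ∈ B | y < x} ≤ x := by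
  simpa using card_le_card (fun y hy => mem_range.2 (mem_filter.1 hy).2 : {y ∈ B | y < x} ⊆ range x)

theorem sum_card_filter_lt (B : Finset ℕ) : ∑ x ∈ B, #{y ∈ B | y < x} = (#B).choose 2 := by
  induction B using Finset.induction_on_max with
  | empty => simp
  | insert a s ha ih =>
    have has : a ∉ s := fun h => lt_irrefl a (ha a h)
    have hfa : {y ∈ insert a s | y < a} = s := by
      ext y
      simp only [mem_filter, mem_insert]
      exact ⟨fun ⟨h, hlt⟩ => h.resolve_left hlt.ne, fun hy => ⟨Or.inr hy, ha y hy⟩⟩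
    have hfx : ∀ x ∈ s, {y ∈ insert a s | y < x} = {y ∈ s | y < x} := by
      intro x hx
      ext y
      simp only [mem_filter, mem_insert]
      exact ⟨fun ⟨h, hlt⟩ => ⟨h.resolve_left (by have := ha x hx; omega), hlt⟩,
        fun ⟨h, hlt⟩ => ⟨Or.inr h, hlt⟩⟩
    rw [sum_insert has, hfa, sum_congr rfl fun x hx => by rw [hfx x hx], ih,
      card_insert_of_notMem has, Nat.choose_two_succ, add_comm]

theorem choose_two_card_le_sum (B : Finset ℕ) : (#B).choose 2 ≤ ∑ x ∈ B, x := by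
  rw [← sum_card_filter_lt]
  exact sum_le_sum fun x _ => card_filter_lt_le B x

theorem weight_add_choose_two (B : Finset ℕ) : weight B + (#B).choose 2 = ∑ x ∈ B, x :=
  Nat.sub_add_cancel (choose_two_card_le_sum B)

theorem weight_le_sum (B : Finset ℕ) : weight B ≤ ∑ x ∈ B, x := Nat.sub_le _ _

/-- The weight counts the hooks: each hook is a pair `y < x` with `x ∈ B`, `y ∉ B`. -/
theorem sum_card_gaps (B : Finset ℕ) : ∑ x ∈ B, #{y ∈ range x | y ∉ B} = weight B := by
  have hx : ∀ x ∈ B, #{y ∈ range x | y ∉ B} + #{y ∈ B | y < x} = x := by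
    intro x _
    have hin : {y ∈ range x | y ∈ B} = {y ∈ B | y < x} := by
      ext y
      simp [and_comm]
    simpa [hin] using card_filter_add_card_filter_not (s := range x) (· ∉ B)
  have := weight_add_choose_two B
  rw [← sum_congr rfl hx, sum_add_distrib, sum_card_filter_lt] at this
  omega

theorem weight_range (k : ℕ) : weight (range k) = 0 := by
  have := weight_add_choose_two (range k)
  rw [card_range, sum_range_id, Nat.choose_two_right] at this
  omega

theorem eq_range_card_of_pred_mem {X : Finset ℕ} (h : ∀ c ∈ X, c ≠ 0 → c - 1 ∈ X) :
    X = range #X := by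
  have hdown : ∀ c ∈ X, ∀ d ≤ c, d ∈ X := by
    intro c hc d hd
    induction c, hd using Nat.le_induction with
    | base => exact hc
    | succ c _ ih => exact ih (by simpa using h (c + 1) hc (by omega))
  refine eq_of_subset_of_card_le (fun c hc => mem_range.2 ?_) (by simp)
  by_contra hlt
  have : range (#X + 1) ⊆ X := fun d hd => hdown c hc d (by simp at hd; omega)
  simpa using card_le_card this

theorem exists_mem_pred_notMem {X : Finset ℕ} (h : weight X ≠ 0) :
    ∃ c ∈ X, c ≠ 0 ∧ c - 1 ∉ X := by
  by_contra! hc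
  exact h (eq_range_card_of_pred_mem hc ▸ weight_range _)

theorem weight_insert_zero_image_succ (X : Finset ℕ) :
    weight (insert 0 (X.image (· + 1))) = weight X := by
  have h0 : (0 : ℕ) ∉ X.image (· + 1) := by simp
  have hsum : ∑ x ∈ insert 0 (X.image (· + 1)), x = ∑ x ∈ X, x + #X := by
    rw [sum_insert h0, sum_image (fun a _ b _ h => Nat.add_right_cancel h)]
    simp [sum_add_distrib]
  have hcard : #(insert 0 (X.image (· + 1))) = #X + 1 := by
    rw [card_insert_of_notMem h0, card_image_of_injective _ (add_left_injective 1)]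
  have := weight_add_choose_two (insert 0 (X.image (· + 1)))
  have := weight_add_choose_two X
  rw [hsum, hcard, Nat.choose_two_succ] at *
  omega

theorem weight_insert_sub_erase {X : Finset ℕ} {z h : ℕ} (hz : z ∈ X) (hzh : h ≤ z)
    (hfree : z - h ∉ X) : weight (insert (z - h) (X.erase z)) + h = weight X := by
  have hfree' : z - h ∉ X.erase z := fun hm => hfree (mem_of_mem_erase hm)
  have hsum : ∑ x ∈ insert (z - h) (X.erase z), x + h = ∑ x ∈ X, x := by
    rw [sum_insert hfree', ← add_sum_erase X (fun x => x) hz]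
    omega
  have hcard : #(insert (z - h) (X.erase z)) = #X := by
    rw [card_insert_of_notMem hfree', card_erase_add_one hz]
  have h1 := weight_add_choose_two (insert (z - h) (X.erase z))
  have h2 := weight_add_choose_two X
  rw [hcard] at h1
  omega

section Runners

variable {q r : ℕ}

/-- The `r`-th runner of the `q`-abacus of `B`. -/
def runner (q r : ℕ) (B : Finset ℕ) : Finset ℕ := {x ∈ B | x % q = r}.image (· / q)

/-- The number of hooks of length divisible by `q`. -/
def hookCount (q : ℕ) (B : Finset ℕ) : ℕ := ∑ x ∈ B, #{y ∈ range x | y ∉ B ∧ q ∣ x - y}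

theorem mem_runner (hr : r < q) {B : Finset ℕ} {c : ℕ} : c ∈ runner q r B ↔ q * c + r ∈ B := by
  simp only [runner, mem_image, mem_filter]
  constructor
  · rintro ⟨x, ⟨hx, rfl⟩, rfl⟩
    rwa [Nat.div_add_mod]
  · intro h
    refine ⟨q * c + r, ⟨h, ?_⟩, ?_⟩
    · rw [Nat.mul_add_mod, Nat.mod_eq_of_lt hr]
    · rw [Nat.mul_add_div (by omega), Nat.div_eq_of_lt hr, add_zero]

theorem div_injOn_filter_mod (B : Finset ℕ) :
    Set.InjOn (· / q) (({x ∈ B | x % q = r} : Finset ℕ) : Set ℕ) := by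
  intro x hx y hy h
  simp only [coe_filter] at hx hy
  rw [← Nat.div_add_mod x q, ← Nat.div_add_mod y q, hx.2, hy.2]
  exact congrArg (q * · + r) h

theorem card_runner (B : Finset ℕ) : #(runner q r B) = #{x ∈ B | x % q = r} :=
  card_image_of_injOn (div_injOn_filter_mod B)

theorem sum_runner {M : Type*} [AddCommMonoid M] (B : Finset ℕ) (g : ℕ → M) :
    ∑ c ∈ runner q r B, g c = ∑ x ∈ B with x % q = r, g (x / q) :=
  sum_image (div_injOn_filter_mod B)

/-- The hooks of length divisible by `q` whose top bead is `x` correspond to the hooks on the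
runner of `x` whose top bead is `x / q`. -/
theorem card_gaps_dvd {B : Finset ℕ} {x : ℕ} (hr : r < q) (hx : x % q = r) :
    #{y ∈ range x | y ∉ B ∧ q ∣ x - y} = #{c ∈ range (x / q) | c ∉ runner q r B} := by
  have hxq : q * (x / q) + r = x := hx ▸ Nat.div_add_mod x q
  refine card_bij' (fun y _ => y / q) (fun c _ => q * c + r) ?_ ?_ ?_ ?_
  · intro y hy
    simp only [mem_filter, mem_range] at hy ⊢
    obtain ⟨hyx, hyB, hdvd⟩ := hy
    have hyq : q * (y / q) + r = y := by
      rw [← hx, ← (Nat.modEq_iff_dvd' hyx.le).2 hdvd, Nat.div_add_mod]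
    refine ⟨?_, fun hc => hyB ?_⟩
    · by_contra! hle
      have := Nat.mul_le_mul_left q hle
      omega
    · rwa [mem_runner hr, hyq] at hc
  · intro c hc
    simp only [mem_filter, mem_range] at hc ⊢
    have hlt : q * c + r < x := by
      have := (Nat.mul_lt_mul_left (by omega : 0 < q)).2 hc.1
      omega
    refine ⟨hlt, fun hB => hc.2 ((mem_runner hr).2 hB), ?_⟩
    exact (Nat.modEq_iff_dvd' hlt.le).1
      (by rw [Nat.ModEq, Nat.mul_add_mod, Nat.mod_eq_of_lt hr, hx])
  · intro y hy
    simp only [mem_filter, mem_range] at hy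
    rw [← hx, ← (Nat.modEq_iff_dvd' hy.1.le).2 hy.2.2]
    exact Nat.div_add_mod y q
  · intro c _
    rw [Nat.mul_add_div (by omega), Nat.div_eq_of_lt hr, add_zero]

theorem hookCount_eq_sum_weight_runner (hq : 0 < q) (B : Finset ℕ) :
    hookCount q B = ∑ r ∈ range q, weight (runner q r B) := by
  rw [hookCount, ← sum_fiberwise_of_maps_to (g := (· % q)) (t := range q)
    fun x _ => mem_range.2 (Nat.mod_lt x hq)]
  refine sum_congr rfl fun r hr => ?_
  rw [← sum_card_gaps, sum_runner]
  exact sum_congr rfl fun x hx => card_gaps_dvd (mem_range.1 hr) (mem_filter.1 hx).2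

theorem sum_eq_sum_runner (hq : 0 < q) (B : Finset ℕ) :
    ∑ x ∈ B, x = ∑ r ∈ range q, (q * ∑ c ∈ runner q r B, c + r * #(runner q r B)) := by
  rw [← sum_fiberwise_of_maps_to (g := (· % q)) (t := range q)
    fun x _ => mem_range.2 (Nat.mod_lt x hq)]
  refine sum_congr rfl fun r _ => ?_
  rw [sum_runner, card_runner, card_eq_sum_ones, mul_sum, mul_sum, ← sum_add_distrib]
  refine sum_congr rfl fun x hx => ?_
  have := Nat.div_add_mod x q
  rw [(mem_filter.1 hx).2] at this
  omega

theorem card_eq_sum_card_runner (hq : 0 < q) (B : Finset ℕ) :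
    #B = ∑ r ∈ range q, #(runner q r B) := by
  simp only [card_runner]
  exact card_eq_sum_card_fiberwise fun x _ => mem_range.2 (Nat.mod_lt x hq)

theorem exists_runner_eq_range (hq : 0 < q) (n : ℕ → ℕ) :
    ∃ P : Finset ℕ, ∀ r < q, runner q r P = range (n r) := by
  set N := ∑ r ∈ range q, n r
  refine ⟨{x ∈ range (q * (N + 1)) | x / q < n (x % q)}, fun r hr => ?_⟩
  ext c
  have hnN : n r ≤ N := single_le_sum (fun _ _ => Nat.zero_le _) (mem_range.2 hr)
  have hdiv : (q * c + r) / q = c := by rw [Nat.mul_add_div hq, Nat.div_eq_of_lt hr, add_zero]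
  have hmod : (q * c + r) % q = r := by rw [Nat.mul_add_mod, Nat.mod_eq_of_lt hr]
  simp only [mem_runner hr, mem_filter, mem_range, hdiv, hmod]
  refine ⟨And.right, fun hc => ⟨?_, hc⟩⟩
  calc q * c + r < q * c + q := by omega
    _ = q * (c + 1) := by ring
    _ ≤ q * (N + 1) := Nat.mul_le_mul_left q (by omega)

/-- `weight B - q * hookCount q B` is the weight of the `q`-core, whose beta-set `P` is obtained
by pushing the beads of every runner down to its bottom positions. -/
theorem mul_hookCount_le_weight (hq : 0 < q) (B : Finset ℕ) : q * hookCount q B ≤ weight B := by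
  obtain ⟨P, hP⟩ := exists_runner_eq_range hq fun r => #(runner q r B)
  have hcore := choose_two_card_le_sum P
  have hPcard : #P = ∑ r ∈ range q, #(runner q r B) := by
    rw [card_eq_sum_card_runner hq]
    exact sum_congr rfl fun r hr => by rw [hP r (mem_range.1 hr), card_range]
  have hPsum : ∑ x ∈ P, x
      = ∑ r ∈ range q, (q * (#(runner q r B)).choose 2 + r * #(runner q r B)) := by
    rw [sum_eq_sum_runner hq]
    exact sum_congr rfl fun r hr => by
      rw [hP r (mem_range.1 hr), sum_range_id, ← Nat.choose_two_right, card_range]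
  rw [hPcard, hPsum] at hcore
  have hB := weight_add_choose_two B
  rw [sum_eq_sum_runner hq, card_eq_sum_card_runner hq] at hB
  have hruns : ∀ r ∈ range q, q * ∑ c ∈ runner q r B, c + r * #(runner q r B)
      = q * weight (runner q r B) + (q * (#(runner q r B)).choose 2 + r * #(runner q r B)) := by
    intro r _
    rw [← weight_add_choose_two]
    ring
  rw [sum_congr rfl hruns, sum_add_distrib, ← mul_sum, ← hookCount_eq_sum_weight_runner hq] at hB
  omega

theorem runner_runner {s ε : ℕ} (hs : s < q) (hε : ε < 2) (B : Finset ℕ) :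
    runner q s (runner 2 ε B) = runner (2 * q) (2 * s + ε) B := by
  ext c
  rw [mem_runner hs, mem_runner hε, mem_runner (by omega : 2 * s + ε < 2 * q)]
  ring_nf

theorem hookCount_two_mul (hq : 0 < q) (B : Finset ℕ) :
    hookCount (2 * q) B = hookCount q (runner 2 0 B) + hookCount q (runner 2 1 B) := by
  rw [hookCount_eq_sum_weight_runner (by omega), hookCount_eq_sum_weight_runner hq,
    hookCount_eq_sum_weight_runner hq, sum_range_two_mul, sum_add_distrib]
  congr 1 <;> refine sum_congr rfl fun s hs => ?_
  · rw [runner_runner (mem_range.1 hs) (by omega), add_zero]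
  · rw [runner_runner (mem_range.1 hs) (by omega)]

end Runners

def hookProd (B : Finset ℕ) : ℕ := ∏ x ∈ B, ∏ y ∈ range x with y ∉ B, (x - y)

theorem sub_ne_zero_of_mem_gaps {B : Finset ℕ} {x y : ℕ} (hy : y ∈ {y ∈ range x | y ∉ B}) :
    x - y ≠ 0 := by
  have := mem_range.1 (mem_filter.1 hy).1
  omega

theorem hookProd_ne_zero (B : Finset ℕ) : hookProd B ≠ 0 :=
  prod_ne_zero_iff.2 fun _ _ => prod_ne_zero_iff.2 fun _ => sub_ne_zero_of_mem_gaps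

theorem factorization_hookProd {p b : ℕ} (hp : p.Prime) {B : Finset ℕ} (hb : ∀ x ∈ B, x < p ^ b) :
    (hookProd B).factorization p = ∑ i ∈ Ico 1 b, hookCount (p ^ i) B := by
  calc (hookProd B).factorization p
      = ∑ x ∈ B, ∑ y ∈ range x with y ∉ B, #{i ∈ Ico 1 b | p ^ i ∣ x - y} := by
        rw [hookProd, Nat.factorization_prod_apply fun _ _ =>
          prod_ne_zero_iff.2 fun _ => sub_ne_zero_of_mem_gaps]
        refine sum_congr rfl fun x hx => ?_
        rw [Nat.factorization_prod_apply fun _ => sub_ne_zero_of_mem_gaps]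
        refine sum_congr rfl fun y hy => ?_
        have hyx := mem_range.1 (mem_filter.1 hy).1
        exact Nat.factorization_eq_card_pow_dvd_of_lt hp (by omega) (by have := hb x hx; omega)
    _ = ∑ i ∈ Ico 1 b, hookCount (p ^ i) B := by
        simp only [hookCount, card_filter, ← filter_filter]
        rw [sum_comm]
        exact sum_congr rfl fun x _ => sum_comm

theorem lt_pow_sum_succ {p : ℕ} (hp : 1 < p) {B : Finset ℕ} {x : ℕ} (hx : x ∈ B) :
    x < p ^ (∑ y ∈ B, y + 1) :=
  ((single_le_sum (f := fun y => y) (fun _ _ => Nat.zero_le _) hx).trans_lt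
    (Nat.lt_succ_self _)).trans (Nat.lt_pow_self hp)

theorem hookProd_dvd_factorial (B : Finset ℕ) : hookProd B ∣ (weight B)! := by
  rw [← Nat.factorization_le_iff_dvd (hookProd_ne_zero B) (Nat.factorial_ne_zero _),
    Finsupp.le_def]
  intro p
  by_cases hp : p.Prime
  · have hlog : Nat.log p (weight B) < ∑ y ∈ B, y + 1 :=
      (Nat.log_le_self p _).trans_lt (Nat.lt_succ_of_le (weight_le_sum B))
    rw [factorization_hookProd hp fun x hx => lt_pow_sum_succ hp.one_lt hx,
      Nat.factorization_factorial hp hlog]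
    refine sum_le_sum fun i _ => (Nat.le_div_iff_mul_le (pow_pos hp.pos i)).2 ?_
    rw [mul_comm]
    exact mul_hookCount_le_weight (pow_pos hp.pos i) B
  · simp [Nat.factorization_eq_zero_of_not_prime _ hp]

def IsOdd (B : Finset ℕ) : Prop := Odd ((weight B)! / hookProd B)

theorem isOdd_iff_factorization (B : Finset ℕ) :
    IsOdd B ↔ (weight B)!.factorization 2 = (hookProd B).factorization 2 :=
  Nat.odd_div_iff_factorization_two_eq (Nat.factorial_ne_zero _) (hookProd_dvd_factorial B)

theorem hookCount_two (B : Finset ℕ) :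
    hookCount 2 B = weight (runner 2 0 B) + weight (runner 2 1 B) := by
  rw [hookCount_eq_sum_weight_runner Nat.two_pos, sum_range_succ, sum_range_one]

/-- A hook of even length `2m` of `B` is a hook of length `m` on one of the two runners. -/
theorem factorization_two_hookProd (B : Finset ℕ) :
    (hookProd B).factorization 2 = weight (runner 2 0 B) + weight (runner 2 1 B)
      + (hookProd (runner 2 0 B)).factorization 2 + (hookProd (runner 2 1 B)).factorization 2 := by
  set b := ∑ y ∈ B, y + 1
  have hB : ∀ x ∈ B, x < 2 ^ (b + 1) := fun x hx =>
    (lt_pow_sum_succ Nat.one_lt_two hx).trans (Nat.pow_lt_pow_succ Nat.one_lt_two)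
  have hrun : ∀ ε, ∀ c ∈ runner 2 ε B, c < 2 ^ b := by
    intro ε c hc
    obtain ⟨x, hx, rfl⟩ := mem_image.1 hc
    exact (Nat.div_le_self x 2).trans_lt (lt_pow_sum_succ Nat.one_lt_two (mem_filter.1 hx).1)
  rw [factorization_hookProd Nat.prime_two hB, factorization_hookProd Nat.prime_two (hrun 0),
    factorization_hookProd Nat.prime_two (hrun 1), sum_eq_sum_Ico_succ_bot (by omega),
    ← sum_Ico_add', pow_one, hookCount_two]
  simp only [pow_succ', hookCount_two_mul (Nat.two_pow_pos _), sum_add_distrib]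
  ring

theorem two_mul_weight_runner_le (B : Finset ℕ) :
    2 * (weight (runner 2 0 B) + weight (runner 2 1 B)) ≤ weight B :=
  hookCount_two B ▸ mul_hookCount_le_weight Nat.two_pos B

theorem isOdd_iff_runners (B : Finset ℕ) :
    IsOdd B ↔ weight B ≤ 2 * (weight (runner 2 0 B) + weight (runner 2 1 B)) + 1
      ∧ IsOdd (runner 2 0 B) ∧ IsOdd (runner 2 1 B)
      ∧ weight (runner 2 0 B) &&& weight (runner 2 1 B) = 0 := by
  rw [isOdd_iff_factorization, isOdd_iff_factorization, isOdd_iff_factorization,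
    factorization_two_hookProd, ← Nat.factorization_two_factorial_add_eq_iff]
  have hle := two_mul_weight_runner_le B
  have hdvd₀ := (Nat.factorization_le_iff_dvd (hookProd_ne_zero _) (Nat.factorial_ne_zero _)).2
    (hookProd_dvd_factorial (runner 2 0 B)) 2
  have hdvd₁ := (Nat.factorization_le_iff_dvd (hookProd_ne_zero _) (Nat.factorial_ne_zero _)).2
    (hookProd_dvd_factorial (runner 2 1 B)) 2
  set w₀ := weight (runner 2 0 B)
  set w₁ := weight (runner 2 1 B)
  have hstep := Nat.factorization_two_factorial (weight B)
  have hmono := Nat.factorization_factorial_mono 2 (by omega : w₀ + w₁ ≤ weight B / 2)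
  have hadd := Nat.factorization_factorial_add_le 2 w₀ w₁
  constructor
  · intro h
    have hhalf : w₀ + w₁ = weight B / 2 := by omega
    rw [← hhalf] at hstep
    omega
  · rintro ⟨hw, h₀, h₁, hkummer⟩
    rw [show weight B / 2 = w₀ + w₁ by omega] at hstep
    omega

theorem runner_zero_insert_zero_image_succ (X : Finset ℕ) :
    runner 2 0 (insert 0 (X.image (· + 1))) = insert 0 ((runner 2 1 X).image (· + 1)) := by
  ext c
  simp only [mem_runner Nat.two_pos, mem_runner Nat.one_lt_two, mem_insert, mem_image]
  constructor
  · rintro (h | ⟨y, hy, hyc⟩)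
    · omega
    · exact Or.inr ⟨c - 1, by rwa [show 2 * (c - 1) + 1 = y by omega], by omega⟩
  · rintro (rfl | ⟨y, hy, rfl⟩)
    · exact Or.inl rfl
    · exact Or.inr ⟨_, hy, by ring⟩

theorem runner_one_insert_zero_image_succ (X : Finset ℕ) :
    runner 2 1 (insert 0 (X.image (· + 1))) = runner 2 0 X := by
  ext c
  simp only [mem_runner Nat.two_pos, mem_runner Nat.one_lt_two, mem_insert, mem_image]
  constructor
  · rintro (h | ⟨y, hy, hyc⟩)
    · omega
    · rwa [show 2 * c + 0 = y by omega]
  · exact fun h => Or.inr ⟨_, h, rfl⟩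

theorem weight_runners_insert_zero_image_succ (X : Finset ℕ) :
    weight (runner 2 0 (insert 0 (X.image (· + 1))))
      + weight (runner 2 1 (insert 0 (X.image (· + 1))))
      = weight (runner 2 0 X) + weight (runner 2 1 X) := by
  rw [runner_zero_insert_zero_image_succ, runner_one_insert_zero_image_succ,
    weight_insert_zero_image_succ, add_comm]

section MoveBead

variable {B : Finset ℕ} {x ε : ℕ}

theorem runner_insert_sub_two_erase (hε : ε < 2) (h2 : 2 ≤ x) :
    runner 2 ε (insert (x - 2) (B.erase x))
      = if x % 2 = ε then insert (x / 2 - 1) ((runner 2 ε B).erase (x / 2)) else runner 2 ε B := by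
  ext c
  simp only [apply_ite (c ∈ ·), mem_runner hε, mem_insert, mem_erase]
  split_ifs with hx
  · rw [show 2 * c + ε = x - 2 ↔ c = x / 2 - 1 by omega, show 2 * c + ε ≠ x ↔ c ≠ x / 2 by omega]
  · simp only [show 2 * c + ε ≠ x - 2 by omega, show 2 * c + ε ≠ x by omega, false_or, ne_eq,
      not_false_eq_true, true_and]

theorem weight_runner_insert_sub_two_erase (hx : x ∈ B) (h2 : 2 ≤ x) (hfree : x - 2 ∉ B)
    (hε : ε < 2) :
    weight (runner 2 ε (insert (x - 2) (B.erase x))) + (if x % 2 = ε then 1 else 0)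
      = weight (runner 2 ε B) := by
  rw [runner_insert_sub_two_erase hε h2]
  split_ifs with h
  · refine weight_insert_sub_erase ?_ (by omega) ?_
    · rwa [mem_runner hε, ← h, Nat.div_add_mod]
    · rwa [mem_runner hε, show 2 * (x / 2 - 1) + ε = x - 2 by omega]
  · rfl

theorem weight_runners_insert_sub_two_erase (hx : x ∈ B) (h2 : 2 ≤ x) (hfree : x - 2 ∉ B) :
    weight (runner 2 0 (insert (x - 2) (B.erase x)))
      + weight (runner 2 1 (insert (x - 2) (B.erase x))) + 1
      = weight (runner 2 0 B) + weight (runner 2 1 B) := by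
  have h₀ := weight_runner_insert_sub_two_erase hx h2 hfree Nat.two_pos
  have h₁ := weight_runner_insert_sub_two_erase hx h2 hfree Nat.one_lt_two
  split_ifs at h₀ h₁ <;> omega

end MoveBead

end BetaSet

namespace OldPartition

open Finset BetaSet

section BetaSets

variable {l : OldPartition} {N : ℕ}

def beta (l : OldPartition) (N i : ℕ) : ℕ := l.parts i + (N - 1 - i)

theorem parts_eq_zero_of_le (hN : l.parts N = 0) {i : ℕ} (hi : N ≤ i) : l.parts i = 0 :=
  Nat.le_zero.1 (hN ▸ l.antitone hi)

theorem lt_of_parts_pos (hN : l.parts N = 0) {i : ℕ} (hi : 0 < l.parts i) : i < N := by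
  by_contra h
  have := parts_eq_zero_of_le hN (not_lt.1 h)
  omega

theorem beta_strictAntiOn : StrictAntiOn (l.beta N) (Set.Iio N) := by
  intro i _ i' hi' h
  have := l.antitone h.le
  simp only [beta, Set.mem_Iio] at *
  omega

theorem betaSet_eq_image : l.betaSet N = (range N).image (l.beta N) := rfl

theorem card_betaSet (l : OldPartition) (N : ℕ) : #(l.betaSet N) = N := by
  rw [betaSet_eq_image, card_image_of_injOn (by rw [coe_range]; exact beta_strictAntiOn.injOn),
    card_range]

theorem sum_betaSet (l : OldPartition) (N : ℕ) :
    ∑ x ∈ l.betaSet N, x = ∑ i ∈ range N, l.parts i + N.choose 2 := by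
  rw [betaSet_eq_image, sum_image (by rw [coe_range]; exact beta_strictAntiOn.injOn)]
  simp only [beta, sum_add_distrib, add_right_inj]
  rw [sum_range_reflect (fun i => i) N, sum_range_id, Nat.choose_two_right]

theorem size_eq_sum_range (hN : l.parts N = 0) : l.size = ∑ i ∈ range N, l.parts i :=
  finsum_eq_sum_of_support_subset _ fun i hi => by
    simpa using lt_of_parts_pos hN (Nat.pos_of_ne_zero hi)

theorem size_eq_weight (hN : l.parts N = 0) : l.size = weight (l.betaSet N) := by
  have := weight_add_choose_two (l.betaSet N)
  rw [card_betaSet, sum_betaSet, ← size_eq_sum_range hN] at this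
  omega

theorem conjParts_eq_card (hN : l.parts N = 0) (j : ℕ) :
    l.conjParts j = #{i ∈ range N | j < l.parts i} := by
  rw [conjParts, ← Set.ncard_coe_finset, ← Nat.card_coe_set_eq]
  congr
  ext i
  simpa using fun h => lt_of_parts_pos hN (by omega)

theorem lt_parts_iff_lt_conjParts (hN : l.parts N = 0) {i j : ℕ} :
    j < l.parts i ↔ i < l.conjParts j := by
  set T := {i ∈ range N | j < l.parts i}
  have hT : T = range #T := eq_range_card_of_pred_mem fun c hc _ => by
    simp only [T, mem_filter, mem_range] at hc ⊢
    exact ⟨by omega, hc.2.trans_le (l.antitone (Nat.sub_le c 1))⟩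
  rw [conjParts_eq_card hN]
  change _ ↔ i < #T
  rw [← mem_range (n := #T), ← hT]
  simpa [T] using fun h => lt_of_parts_pos hN (by omega)

theorem conjParts_le (hN : l.parts N = 0) (j : ℕ) : l.conjParts j ≤ N := by
  simpa [conjParts_eq_card hN] using card_filter_le (range N) _

theorem conjParts_antitone (hN : l.parts N = 0) : Antitone l.conjParts := fun j j' h => by
  simp only [conjParts_eq_card hN]
  exact card_le_card (monotone_filter_right _ fun i hi => by omega)

theorem card_gaps_below_beta {i : ℕ} (hi : i < N) :
    #{y ∈ range (l.beta N i) | y ∉ l.betaSet N} = l.parts i := by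
  have hbelow : {y ∈ range (l.beta N i) | y ∈ l.betaSet N} = (Ioo i N).image (l.beta N) := by
    ext x
    simp only [mem_filter, mem_range, mem_image, mem_Ioo, betaSet_eq_image]
    constructor
    · rintro ⟨hx, i', hi', rfl⟩
      exact ⟨i', ⟨(beta_strictAntiOn.lt_iff_gt hi' hi).1 hx, hi'⟩, rfl⟩
    · rintro ⟨i', ⟨hii', hi'⟩, rfl⟩
      exact ⟨beta_strictAntiOn hi hi' hii', i', hi', rfl⟩
  have hcard := card_filter_add_card_filter_not (s := range (l.beta N i)) (· ∈ l.betaSet N)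
  rw [hbelow, card_image_of_injOn (beta_strictAntiOn.injOn.mono fun x hx => (mem_Ioo.1 hx).2),
    Nat.card_Ioo, card_range] at hcard
  have : l.beta N i = l.parts i + (N - 1 - i) := rfl
  omega

theorem strictMono_add_sub_conjParts (hN : l.parts N = 0) : StrictMono fun j => N + j - l.conjParts j :=
  fun j j' h => by
    dsimp only
    have := conjParts_antitone hN h.le
    have := conjParts_le hN j
    omega

theorem add_sub_conjParts_mem_gaps (hN : l.parts N = 0) {i j : ℕ} (hj : j < l.parts i) :
    N + j - l.conjParts j ∈ {y ∈ range (l.beta N i) | y ∉ l.betaSet N} := by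
  have hc := conjParts_le hN j
  have hic := (lt_parts_iff_lt_conjParts hN).1 hj
  simp only [mem_filter, mem_range, beta, betaSet_eq_image, mem_image, not_exists,
    not_and]
  refine ⟨by omega, fun i' hi' heq => ?_⟩
  by_cases hj' : j < l.parts i'
  · have := (lt_parts_iff_lt_conjParts hN).1 hj'
    omega
  · have := mt (lt_parts_iff_lt_conjParts hN).2 hj'
    omega

theorem image_add_sub_conjParts (hN : l.parts N = 0) {i : ℕ} (hi : i < N) :
    (range (l.parts i)).image (fun j => N + j - l.conjParts j)
      = {y ∈ range (l.beta N i) | y ∉ l.betaSet N} := by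
  refine eq_of_subset_of_card_le (fun y hy => ?_) ?_
  · obtain ⟨j, hj, rfl⟩ := mem_image.1 hy
    exact add_sub_conjParts_mem_gaps hN (mem_range.1 hj)
  · rw [card_gaps_below_beta hi, card_image_of_injective _ (strictMono_add_sub_conjParts hN).injective,
      card_range]

/-- The cell `(i, j)` corresponds to the empty position `N + j - λ'ⱼ` below the bead
`l.beta N i`; its hook length is the distance between the two. -/
theorem prod_hookLength_row (hN : l.parts N = 0) {i : ℕ} (hi : i < N) :
    ∏ j ∈ range (l.parts i), l.hookLength i j
      = ∏ y ∈ range (l.beta N i) with y ∉ l.betaSet N, (l.beta N i - y) := by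
  rw [← image_add_sub_conjParts hN hi, prod_image fun _ _ _ _ h => (strictMono_add_sub_conjParts hN).injective h]
  refine prod_congr rfl fun j hj => ?_
  have hj := mem_range.1 hj
  have := (lt_parts_iff_lt_conjParts hN).1 hj
  have := conjParts_le hN j
  simp only [hookLength, beta]
  omega

theorem finprod_hookLength (hN : l.parts N = 0) :
    ∏ᶠ (p : ℕ × ℕ) (_ : p.2 < l.parts p.1), l.hookLength p.1 p.2 = hookProd (l.betaSet N) := by
  set D := {p ∈ range N ×ˢ range (l.parts 0 + 1) | p.2 < l.parts p.1}
  have hD : {p : ℕ × ℕ | p.2 < l.parts p.1} = (D : Set (ℕ × ℕ)) := by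
    ext ⟨i, j⟩
    simp only [Set.mem_ofPred_eq, D, coe_filter, mem_product, mem_range]
    exact ⟨fun h => ⟨⟨lt_of_parts_pos hN (by omega), by have := l.antitone (Nat.zero_le i); omega⟩,
      h⟩, And.right⟩
  calc ∏ᶠ (p : ℕ × ℕ) (_ : p.2 < l.parts p.1), l.hookLength p.1 p.2
      = ∏ p ∈ D, l.hookLength p.1 p.2 := by
        rw [← finprod_mem_coe_finset, ← hD]
        rfl
    _ = ∏ i ∈ range N, ∏ j ∈ range (l.parts i), l.hookLength i j := by
        refine prod_finset_product D (range N) (fun i => range (l.parts i)) fun ⟨i, j⟩ => ?_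
        simp only [D, mem_filter, mem_product, mem_range]
        exact ⟨fun ⟨⟨hi, _⟩, hj⟩ => ⟨hi, hj⟩, fun ⟨hi, hj⟩ =>
          ⟨⟨hi, by have := l.antitone (Nat.zero_le i); omega⟩, hj⟩⟩
    _ = hookProd (l.betaSet N) := by
        rw [hookProd, betaSet_eq_image,
          prod_image (by rw [coe_range]; exact beta_strictAntiOn.injOn)]
        exact prod_congr rfl fun i hi => prod_hookLength_row hN (mem_range.1 hi)

theorem degree_eq (hN : l.parts N = 0) :
    l.degree = (weight (l.betaSet N))! / hookProd (l.betaSet N) := by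
  rw [degree, finprod_hookLength hN, ← size_eq_weight hN]

theorem isOdd_iff (hN : l.parts N = 0) : l.IsOdd ↔ BetaSet.IsOdd (l.betaSet N) := by
  rw [OldPartition.IsOdd, degree_eq hN, BetaSet.IsOdd]

theorem betaSet_succ (hN : l.parts N = 0) :
    l.betaSet (N + 1) = insert 0 ((l.betaSet N).image (· + 1)) := by
  rw [betaSet_eq_image, betaSet_eq_image, range_add_one, image_insert, image_image]
  congr 1
  · simp [beta, hN]
  · refine image_congr fun i hi => ?_
    simp only [beta, Function.comp, Nat.add_sub_cancel]
    have := mem_range.1 hi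
    omega

theorem exists_betaSet_eq (S : Finset ℕ) :
    ∃ l : OldPartition, l.parts #S = 0 ∧ l.betaSet #S = S := by
  induction S using Finset.induction_on_max with
  | empty => exact ⟨⟨fun _ => 0, antitone_const, 0, rfl⟩, rfl, rfl⟩
  | insert a s ha ih =>
    obtain ⟨l, hl, hls⟩ := ih
    have has : a ∉ s := fun h => lt_irrefl a (ha a h)
    have htop : l.parts 0 + #s ≤ a := by
      rcases Nat.eq_zero_or_pos #s with h | h
      · rw [h] at hl ⊢
        omega
      · have h0 : l.beta #s 0 ∈ l.betaSet #s := mem_image_of_mem _ (mem_range.2 h)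
        rw [hls] at h0
        have := ha _ h0
        simp only [beta] at this
        omega
    let m : OldPartition :=
      ⟨fun i => if i = 0 then a - #s else l.parts (i - 1),
        fun i j hij => by
          dsimp only
          split_ifs with hj hi hi
          · rfl
          · omega
          · have := l.antitone (Nat.zero_le (j - 1))
            omega
          · exact l.antitone (by omega),
        #s + 1, by simpa using hl⟩
    refine ⟨m, by simpa [card_insert_of_notMem has, m] using hl, ?_⟩
    rw [card_insert_of_notMem has, betaSet_eq_image, range_add_one', map_eq_image, image_insert,
      image_image]
    conv_rhs => rw [← hls, betaSet_eq_image]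
    congr 1
    · simp [beta, m]
      omega
    · refine image_congr fun i _ => ?_
      show m.beta (#s + 1) (i + 1) = l.beta #s i
      simp only [beta, m, Nat.add_one_ne_zero, if_false, Nat.add_sub_cancel]
      omega

/-- `|λ⁽⁰⁾| + |λ⁽¹⁾|` for the 2-quotient of `l`; by `quotientSize_eq` it does not depend on the
number of beads. -/
noncomputable def quotientSize (l : OldPartition) : ℕ :=
  weight (runner 2 0 (l.betaSet l.finite.choose)) + weight (runner 2 1 (l.betaSet l.finite.choose))

theorem quotientSize_eq (hN : l.parts N = 0) :
    l.quotientSize = weight (runner 2 0 (l.betaSet N)) + weight (runner 2 1 (l.betaSet N)) := by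
  have hshift : ∀ M, l.parts M = 0 → ∀ d, weight (runner 2 0 (l.betaSet (M + d)))
      + weight (runner 2 1 (l.betaSet (M + d)))
      = weight (runner 2 0 (l.betaSet M)) + weight (runner 2 1 (l.betaSet M)) := by
    intro M hM d
    induction d with
    | zero => rfl
    | succ d ih =>
      rw [← add_assoc, betaSet_succ (parts_eq_zero_of_le hM (Nat.le_add_right M d)),
        weight_runners_insert_zero_image_succ, ih]
  have h₀ := l.finite.choose_spec
  rw [quotientSize, ← hshift _ h₀ (N - l.finite.choose), ← hshift _ hN (l.finite.choose - N),
    show l.finite.choose + (N - l.finite.choose) = N + (l.finite.choose - N) by omega]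

end BetaSets

section CoresAndQuotients

variable {x y c l₀ l₁ : OldPartition} {N : ℕ}

theorem RemoveHook.size_eq_add {e : ℕ} (h : RemoveHook x y e) : x.size = y.size + e := by
  obtain ⟨N, hx, hy, z, hz, hez, hfree, hbeta⟩ := h
  rw [size_eq_weight hx, size_eq_weight hy, hbeta, weight_insert_sub_erase hz hez hfree]

theorem RemoveHook.quotientSize_eq_add_one (h : RemoveHook x y 2) :
    x.quotientSize = y.quotientSize + 1 := by
  obtain ⟨N, hx, hy, z, hz, h2, hfree, hbeta⟩ := h
  rw [quotientSize_eq hx, quotientSize_eq hy, hbeta,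
    ← weight_runners_insert_sub_two_erase hz h2 hfree]

theorem exists_removeHook {z e : ℕ} (hN : x.parts N = 0) (hz : z ∈ x.betaSet N) (hez : e ≤ z)
    (hfree : z - e ∉ x.betaSet N) : ∃ y, RemoveHook x y e := by
  obtain ⟨y, hy, hbeta⟩ := exists_betaSet_eq (insert (z - e) ((x.betaSet N).erase z))
  rw [card_insert_of_notMem fun hm => hfree (mem_of_mem_erase hm), card_erase_add_one hz,
    card_betaSet] at hy hbeta
  exact ⟨y, N, hN, hy, z, hz, hez, hfree, hbeta⟩

theorem quotientSize_eq_zero (h : ∀ y, ¬RemoveHook c y 2) : c.quotientSize = 0 := by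
  obtain ⟨N, hN⟩ := c.finite
  rw [quotientSize_eq hN]
  by_contra hne
  obtain ⟨ε, hε, hw⟩ : ∃ ε < 2, weight (runner 2 ε (c.betaSet N)) ≠ 0 := by
    by_cases h₀ : weight (runner 2 0 (c.betaSet N)) = 0
    · exact ⟨1, Nat.one_lt_two, by omega⟩
    · exact ⟨0, Nat.two_pos, h₀⟩
  obtain ⟨z, hz, hz0, hfree⟩ := exists_mem_pred_notMem hw
  rw [mem_runner hε] at hz hfree
  obtain ⟨y, hy⟩ := exists_removeHook hN hz (by omega : 2 ≤ 2 * z + ε)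
    (by rwa [show 2 * z + ε - 2 = 2 * (z - 1) + ε by omega])
  exact h y hy

theorem IsECore.size_add_two_mul_quotientSize (h : IsECore 2 x c) :
    c.size + 2 * x.quotientSize = x.size := by
  obtain ⟨hchain, hcore⟩ := h
  induction hchain using Relation.ReflTransGen.head_induction_on with
  | refl => rw [quotientSize_eq_zero hcore, mul_zero, add_zero]
  | head hxy _ ih =>
    have := hxy.size_eq_add
    have := hxy.quotientSize_eq_add_one
    omega

theorem exists_isECore_two (x : OldPartition) : ∃ c, IsECore 2 x c := by
  induction h : x.quotientSize using Nat.strong_induction_on generalizing x with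
  | _ n ih =>
    by_cases hx : ∀ y, ¬RemoveHook x y 2
    · exact ⟨x, .refl, hx⟩
    · push Not at hx
      obtain ⟨y, hy⟩ := hx
      obtain ⟨c, hc, hcore⟩ := ih _ (by have := hy.quotientSize_eq_add_one; omega) y rfl
      exact ⟨c, .head hy hc, hcore⟩

theorem IsQuotient2.exists_runner (h : IsQuotient2 x l₀ l₁) :
    ∃ N, x.parts N = 0
      ∧ l₀.size = weight (runner 2 0 (x.betaSet N)) ∧ l₁.size = weight (runner 2 1 (x.betaSet N))
      ∧ (l₀.IsOdd ↔ BetaSet.IsOdd (runner 2 0 (x.betaSet N)))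
      ∧ (l₁.IsOdd ↔ BetaSet.IsOdd (runner 2 1 (x.betaSet N))) := by
  obtain ⟨N, -, hN, h₀, h₁, hb₀, hb₁⟩ := h
  refine ⟨N, hN, ?_, ?_, ?_, ?_⟩
  · rw [size_eq_weight h₀, hb₀]
    rfl
  · rw [size_eq_weight h₁, hb₁]
    rfl
  · rw [isOdd_iff h₀, hb₀]
    rfl
  · rw [isOdd_iff h₁, hb₁]
    rfl

theorem IsQuotient2.size_add_size (h : IsQuotient2 x l₀ l₁) :
    l₀.size + l₁.size = x.quotientSize := by
  obtain ⟨N, hN, h₀, h₁, -, -⟩ := h.exists_runner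
  rw [h₀, h₁, quotientSize_eq hN]

theorem IsQuotient2.isOdd_iff (h : IsQuotient2 x l₀ l₁) :
    x.IsOdd ↔ x.size ≤ 2 * (l₀.size + l₁.size) + 1 ∧ l₀.IsOdd ∧ l₁.IsOdd
      ∧ l₀.size &&& l₁.size = 0 := by
  obtain ⟨N, hN, h₀, h₁, ho₀, ho₁⟩ := h.exists_runner
  rw [OldPartition.isOdd_iff hN, isOdd_iff_runners, size_eq_weight hN, ho₀, ho₁, h₀, h₁]

theorem exists_isQuotient2 (x : OldPartition) : ∃ l₀ l₁, IsQuotient2 x l₀ l₁ := by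
  obtain ⟨N, hN⟩ := x.finite
  have h2N : x.parts (2 * N) = 0 := parts_eq_zero_of_le hN (by omega)
  obtain ⟨l₀, h₀, hb₀⟩ := exists_betaSet_eq (runner 2 0 (x.betaSet (2 * N)))
  obtain ⟨l₁, h₁, hb₁⟩ := exists_betaSet_eq (runner 2 1 (x.betaSet (2 * N)))
  rw [card_runner] at h₀ hb₀ h₁ hb₁
  exact ⟨l₀, l₁, 2 * N, even_two_mul N, h2N, h₀, h₁, hb₀, hb₁⟩

theorem size_eq_of_isECore_of_isQuotient2 (hc : IsECore 2 x c) (hq : IsQuotient2 x l₀ l₁) :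
    x.size = c.size + 2 * (l₀.size + l₁.size) := by
  rw [hq.size_add_size, hc.size_add_two_mul_quotientSize]

theorem isOdd_iff_of_isECore_of_isQuotient2 (hc : IsECore 2 x c) (hq : IsQuotient2 x l₀ l₁) :
    x.IsOdd ↔ c.size ≤ 1 ∧ l₀.IsOdd ∧ l₁.IsOdd ∧ l₀.size &&& l₁.size = 0 := by
  rw [hq.isOdd_iff, size_eq_of_isECore_of_isQuotient2 hc hq, add_comm _ 1, Nat.add_le_add_iff_right]

theorem IsECore.size_le_one_of_isOdd (hc : IsECore 2 x c) (hx : x.IsOdd) : c.size ≤ 1 := by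
  obtain ⟨l₀, l₁, hq⟩ := exists_isQuotient2 x
  exact ((isOdd_iff_of_isECore_of_isQuotient2 hc hq).1 hx).1

end CoresAndQuotients

section Tower

def IsOddRow (k : ℕ) (f : ℕ → OldPartition) : Prop :=
  (∀ i < 2 ^ k, (f i).IsOdd) ∧ PairwiseBitDisjoint (2 ^ k) fun i => (f i).size

variable {k : ℕ} {l : OldPartition} {f g c : ℕ → OldPartition}

theorem isOddRow_iff_succ (hq : ∀ i < 2 ^ k, IsQuotient2 (g i) (f (2 * i)) (f (2 * i + 1)))
    (hc : ∀ i < 2 ^ k, IsECore 2 (g i) (c i)) :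
    IsOddRow k g ↔ ∑ i ∈ range (2 ^ k), (c i).size ≤ 1 ∧ IsOddRow (k + 1) f := by
  have hnode := fun i hi => isOdd_iff_of_isECore_of_isQuotient2 (hc i hi) (hq i hi)
  have hsize := fun i hi => size_eq_of_isECore_of_isQuotient2 (hc i hi) (hq i hi)
  rw [IsOddRow, IsOddRow, pow_succ', Nat.forall_lt_two_mul_iff, pairwiseBitDisjoint_two_mul_iff]
  constructor
  · rintro ⟨hodd, hdisj⟩
    have hc1 : ∀ i < 2 ^ k, (c i).size ≤ 1 := fun i hi => ((hnode i hi).1 (hodd i hi)).1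
    obtain ⟨hsum, hdisj'⟩ := (pairwiseBitDisjoint_iff_of_eq_add_two_mul hc1 hsize).1 hdisj
    refine ⟨hsum, fun i hi => ?_, fun i hi => ((hnode i hi).1 (hodd i hi)).2.2.2, hdisj'⟩
    exact ⟨((hnode i hi).1 (hodd i hi)).2.1, ((hnode i hi).1 (hodd i hi)).2.2.1⟩
  · rintro ⟨hsum, hodd, hsib, hdisj⟩
    have hc1 : ∀ i < 2 ^ k, (c i).size ≤ 1 := fun i hi =>
      (single_le_sum (f := fun i => (c i).size) (fun _ _ => Nat.zero_le _) (mem_range.2 hi)).trans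
        hsum
    exact ⟨fun i hi => (hnode i hi).2 ⟨hc1 i hi, (hodd i hi).1, (hodd i hi).2, hsib i hi⟩,
      (pairwiseBitDisjoint_iff_of_eq_add_two_mul hc1 hsize).2 ⟨hsum, hdisj⟩⟩

theorem IsOddRow.sum_size_le_one (hg : IsOddRow k g) (hc : ∀ i < 2 ^ k, IsECore 2 (g i) (c i)) :
    ∑ i ∈ range (2 ^ k), (c i).size ≤ 1 := by
  have hc1 : ∀ i < 2 ^ k, (c i).size ≤ 1 := fun i hi => (hc i hi).size_le_one_of_isOdd (hg.1 i hi)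
  refine ((pairwiseBitDisjoint_iff_of_eq_add_two_mul (s := fun i => (g i).quotientSize) hc1
    fun i hi => ?_).1 hg.2).1
  exact ((hc i hi).size_add_two_mul_quotientSize).symm

theorem IsQuotRow.isOddRow (hl : l.IsOdd) : ∀ {k f}, IsQuotRow k l f → IsOddRow k f
  | 0, f, hf => ⟨fun i hi => by rwa [show i = 0 by simpa using hi, show f 0 = l from hf],
      fun i hi j hj hij => by simp at hi hj; omega⟩
  | k + 1, f, ⟨g, hg, hq⟩ => by
    choose c hc using fun i => exists_isECore_two (g i)
    exact ((isOddRow_iff_succ hq fun i _ => hc i).1 (hg.isOddRow hl)).2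

theorem IsQuotRow.isOdd_of_isOddRow : ∀ {k f}, IsQuotRow k l f →
    (∀ j < k, ∀ g : ℕ → OldPartition, IsQuotRow j l g → ∀ c : ℕ → OldPartition,
      (∀ i < 2 ^ j, IsECore 2 (g i) (c i)) → ∑ i ∈ range (2 ^ j), (c i).size ≤ 1) →
    IsOddRow k f → l.IsOdd
  | 0, f, hf, _, hrow => hf ▸ hrow.1 0 (by simp)
  | k + 1, f, ⟨g, hg, hq⟩, hcores, hrow => by
    choose c hc using fun i => exists_isECore_two (g i)
    refine hg.isOdd_of_isOddRow (fun j hj => hcores j (by omega)) ?_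
    exact (isOddRow_iff_succ hq fun i _ => hc i).2
      ⟨hcores k (by omega) g hg c fun i _ => hc i, hrow⟩

theorem IsQuotRow.sum_size (hl : l.IsOdd) :
    ∀ {k f}, IsQuotRow k l f → ∑ i ∈ range (2 ^ k), (f i).size = l.size / 2 ^ k
  | 0, f, hf => by simp [show f 0 = l from hf]
  | k + 1, f, ⟨g, hg, hq⟩ => by
    choose c hc using fun i => exists_isECore_two (g i)
    have hsum := (hg.isOddRow hl).sum_size_le_one fun i _ => hc i
    have hsize : ∑ i ∈ range (2 ^ k), (g i).size = ∑ i ∈ range (2 ^ k), (c i).size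
        + 2 * ∑ i ∈ range (2 ^ k), ((f (2 * i)).size + (f (2 * i + 1)).size) := by
      rw [mul_sum, ← sum_add_distrib]
      exact sum_congr rfl fun i hi =>
        size_eq_of_isECore_of_isQuotient2 (hc i) (hq i (mem_range.1 hi))
    rw [pow_succ', sum_range_two_mul, ← mul_comm (2 ^ k) 2, ← Nat.div_div_eq_div_mul,
      ← hg.sum_size hl, hsize]
    omega

end Tower

end OldPartition

open OldPartition

theorem stmt_9 (n k : ℕ) (l : OldPartition) (hl : l.size = n)
    (f : ℕ → OldPartition) (hf : IsQuotRow k l f) :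
    (l.IsOdd ↔
      ((∀ j < k, ∀ g : ℕ → OldPartition, IsQuotRow j l g → ∀ c : ℕ → OldPartition,
          (∀ i < 2 ^ j, IsECore 2 (g i) (c i)) →
          (∑ i ∈ Finset.range (2 ^ j), (c i).size) ≤ 1) ∧
       (∀ i < 2 ^ k, (f i).IsOdd) ∧
       (∀ i < 2 ^ k, ∀ j < 2 ^ k, i ≠ j → (f i).size &&& (f j).size = 0))) ∧
    (l.IsOdd → (∑ i ∈ Finset.range (2 ^ k), (f i).size) = n / 2 ^ k) := by
  refine ⟨⟨fun hodd => ⟨fun j _ g hg c hc => (hg.isOddRow hodd).sum_size_le_one hc,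
    hf.isOddRow hodd⟩, fun ⟨hcores, hrow⟩ => hf.isOdd_of_isOddRow hcores hrow⟩, fun hodd => ?_⟩
  rw [← hl]
  exact hf.sum_size hodd
end

section
/- Let n = 2^t + m with 0 < m < 2^t, t ≥ 3, and 2^ℓ < m with ℓ > 0. Set a = 2^t − m and λ = (m, m, 1^a), a partition of n. Then λ is odd, f_0(λ) = (m, m, 1^{a−1}), f_ℓ(f_0(λ)) = (m, m − 2^ℓ, 1^{a−1}), f_ℓ(λ) = (m−1, m − 2^ℓ + 1, 1^a), and f_0(f_ℓ(λ)) = (m−1, m − 2^ℓ, 1^a); in particular f_0 f_ℓ (λ) ≠ f_ℓ f_0(λ). -/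
open SeqPartition

/-- The partition `(x, y, 1^c)` as a sequence of parts. -/
def pparts (x y c : ℕ) : ℕ → ℕ :=
  fun i => if i = 0 then x else if i = 1 then y else if i < c + 2 then 1 else 0

/-!
For `λ = (x, y, 1^c)` and `n = x + y + c` the hook length formula can be rewritten as
`deg λ = C(n, y-1) C(x+c, c+1) - C(n, x) C(y+c-1, c+1)`, so the parity of `deg λ` is decided by
binomial coefficients modulo 2: `C(2^T, k)` is even for `0 < k < 2^T`, `C(2^T - 1, k)` is odd, and
`C(2^T + r, k) ≡ C(r, k)` for `k < 2^T`.

With enough beads the beta-set of `(x, y, 1^c)` is `{0, …, N-2} \ {N-2-c} ∪ {y+N-2, x+N-1}`.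
Removing a hook moves one bead down, so the result is again of the form `(x', y', 1^c')` unless
the hook is that of the cell `(0, 0)` or `(1, 0)`. Each of the four removals in the theorem has
several such candidates, and the parity formula shows that all but one of them have even degree.
The two composites `f_ℓ f_0 λ` and `f_0 f_ℓ λ` then already differ in their first part.
-/

open Finset Nat

section Shape

variable {x y c : ℕ}

lemma pparts_antitone (hy : 1 ≤ y) (hyx : y ≤ x) : Antitone (pparts x y c) := by
  refine antitone_nat_of_succ_le fun n => ?_
  simp only [pparts]
  grind

lemma pparts_eq_zero_iff (hy : 1 ≤ y) (hyx : y ≤ x) {N : ℕ} :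
    pparts x y c N = 0 ↔ c + 2 ≤ N := by
  simp only [pparts]
  grind

def ppartsPartition (x y c : ℕ) (hy : 1 ≤ y) (hyx : y ≤ x) : SeqPartition :=
  ⟨pparts x y c, pparts_antitone hy hyx, ⟨c + 2, (pparts_eq_zero_iff hy hyx).2 le_rfl⟩⟩

lemma nat_card_setOf_of_iff_lt {P : ℕ → Prop} {k : ℕ} (h : ∀ i, P i ↔ i < k) :
    Nat.card {i : ℕ | P i} = k := by
  rw [show {i : ℕ | P i} = Set.Iio k from Set.ext h, Nat.card_coe_set_eq, Set.ncard_Iio_nat]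

variable {p : SeqPartition}

lemma size_of_pparts (hp : p.parts = pparts x y c) : p.size = x + y + c := by
  have hsupp : Function.support p.parts ⊆ ↑(range (c + 2)) := by
    intro i hi
    simp only [Function.mem_support, hp, pparts] at hi
    simp only [coe_range, Set.mem_Iio]
    grind
  have hleg : ∀ i ∈ range c, pparts x y c (i + 1 + 1) = 1 := by
    intro i hi
    simp only [pparts, mem_range] at hi ⊢
    grind
  rw [SeqPartition.size, finsum_eq_sum_of_support_subset _ hsupp, hp, sum_range_succ',
    sum_range_succ', sum_congr rfl hleg, sum_const, card_range, smul_eq_mul, mul_one]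
  simp only [pparts, zero_add, one_ne_zero, ↓reduceIte]
  ring

lemma conjParts_of_pparts (hp : p.parts = pparts x y c) (hy : 1 ≤ y) (hyx : y ≤ x) (j : ℕ) :
    p.conjParts j = if j = 0 then c + 2 else if j < y then 2 else if j < x then 1 else 0 := by
  rw [conjParts, hp]
  apply nat_card_setOf_of_iff_lt
  intro i
  simp only [pparts]
  grind

lemma hookLength_zero_of_pparts (hp : p.parts = pparts x y c) (hy : 1 ≤ y) (hyx : y ≤ x)
    {j : ℕ} (hj : j < x) :
    p.hookLength 0 j = if j = 0 then x + c + 1 else if j < y then x + 1 - j else x - j := by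
  rw [hookLength, conjParts_of_pparts hp hy hyx, hp]
  simp only [pparts]
  grind

lemma hookLength_one_of_pparts (hp : p.parts = pparts x y c) (hy : 1 ≤ y) (hyx : y ≤ x)
    {j : ℕ} (hj : j < y) :
    p.hookLength 1 j = if j = 0 then y + c else y - j := by
  rw [hookLength, conjParts_of_pparts hp hy hyx, hp]
  simp only [pparts]
  grind

lemma hookLength_leg_of_pparts (hp : p.parts = pparts x y c) (hy : 1 ≤ y) (hyx : y ≤ x)
    {i : ℕ} (hi : i < c) :
    p.hookLength (i + 2) 0 = c - i := by
  rw [hookLength, conjParts_of_pparts hp hy hyx, hp]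
  simp only [pparts]
  grind

end Shape

namespace SeqPartition

noncomputable def hookProd (l : SeqPartition) : ℕ :=
  ∏ᶠ (p : ℕ × ℕ) (_ : p.2 < l.parts p.1), l.hookLength p.1 p.2

lemma degree_eq_of_hookProd_mul {l : SeqPartition} {d : ℕ} (h : l.hookProd * d = l.size !) :
    l.degree = d := by
  have hpos : 0 < l.hookProd := Nat.pos_of_ne_zero fun h0 => by
    rw [h0, zero_mul] at h
    exact factorial_ne_zero _ h.symm
  rw [degree, ← hookProd, ← h, Nat.mul_div_cancel_left _ hpos]

lemma hookProd_eq_prod_range (l : SeqPartition) {N : ℕ} (hN : l.parts N = 0) :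
    l.hookProd = ∏ i ∈ range N, ∏ j ∈ range (l.parts i), l.hookLength i j := by
  have hcell : ∀ q : ℕ × ℕ, q.2 < l.parts q.1 → q.1 < N ∧ q.2 < l.parts 0 := fun q hq =>
    ⟨lt_of_not_ge fun h => by have := l.antitone h; omega,
      hq.trans_le (l.antitone (Nat.zero_le _))⟩
  let cells := (range N ×ˢ range (l.parts 0)).filter fun q => q.2 < l.parts q.1
  have hmem : ∀ q, q ∈ cells ↔ q.2 < l.parts q.1 := fun q => by
    simp only [cells, mem_filter, mem_product, mem_range]
    exact ⟨And.right, fun hq => ⟨hcell q hq, hq⟩⟩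
  rw [hookProd, finprod_cond_eq_prod_of_cond_iff _ fun {q} _ => (hmem q).symm]
  refine prod_finset_product' _ _ _ fun q => ?_
  rw [hmem, mem_range, mem_range]
  exact ⟨fun hq => ⟨(hcell q hq).1, hq⟩, And.right⟩

end SeqPartition

lemma prod_range_sub_eq_factorial (n : ℕ) : ∏ i ∈ range n, (n - i) = n ! := by
  rw [← descFactorial_eq_prod_range, descFactorial_self]

section HookProduct

def hookFactor (x y c : ℕ) : ℕ := (x + c + 1) * (y + c) * x ! * (y - 1)! * c !

variable {p : SeqPartition} {x y c : ℕ}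

lemma prod_hookLength_zero_of_pparts (hp : p.parts = pparts x y c) (hy : 1 ≤ y) (hyx : y ≤ x) :
    (∏ j ∈ range x, p.hookLength 0 j) * (x - y + 1) = (x + c + 1) * x ! := by
  have harm : ∏ j ∈ range (y - 1), p.hookLength 0 (1 + j) = x.descFactorial (y - 1) := by
    rw [descFactorial_eq_prod_range]
    refine prod_congr rfl fun j hj => ?_
    rw [mem_range] at hj
    rw [hookLength_zero_of_pparts hp hy hyx (by omega)]
    grind
  have htail : ∏ j ∈ range (x - y), p.hookLength 0 (1 + (y - 1) + j) = (x - y)! := by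
    rw [← prod_range_sub_eq_factorial]
    refine prod_congr rfl fun j hj => ?_
    rw [mem_range] at hj
    rw [hookLength_zero_of_pparts hp hy hyx (by omega)]
    grind
  have hdesc : (x - y + 1) * (x - y)! * x.descFactorial (y - 1) = x ! := by
    rw [← factorial_succ, ← factorial_mul_descFactorial (show y - 1 ≤ x by omega)]
    congr 2
    omega
  rw [show range x = range (1 + (y - 1) + (x - y)) by congr 1; omega, prod_range_add,
    prod_range_add, prod_range_one, harm, htail, hookLength_zero_of_pparts hp hy hyx (by omega),
    if_pos rfl, ← hdesc]
  ring

lemma prod_hookLength_one_of_pparts (hp : p.parts = pparts x y c) (hy : 1 ≤ y) (hyx : y ≤ x) :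
    ∏ j ∈ range y, p.hookLength 1 j = (y + c) * (y - 1)! := by
  have harm : ∏ j ∈ range (y - 1), p.hookLength 1 (1 + j) = (y - 1)! := by
    rw [← prod_range_sub_eq_factorial]
    refine prod_congr rfl fun j hj => ?_
    rw [mem_range] at hj
    rw [hookLength_one_of_pparts hp hy hyx (by omega)]
    grind
  rw [show range y = range (1 + (y - 1)) by congr 1; omega, prod_range_add, prod_range_one, harm,
    hookLength_one_of_pparts hp hy hyx (by omega), if_pos rfl]

lemma prod_hookLength_leg_of_pparts (hp : p.parts = pparts x y c) (hy : 1 ≤ y) (hyx : y ≤ x) :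
    ∏ i ∈ range c, p.hookLength (i + 2) 0 = c ! := by
  rw [← prod_range_sub_eq_factorial]
  refine prod_congr rfl fun i hi => ?_
  rw [mem_range] at hi
  exact hookLength_leg_of_pparts hp hy hyx hi

lemma hookProd_of_pparts (hp : p.parts = pparts x y c) (hy : 1 ≤ y) (hyx : y ≤ x) :
    p.hookProd * (x - y + 1) = hookFactor x y c := by
  have hrows : ∀ i < c, p.parts (i + 2) = 1 := fun i hi => by
    rw [hp]
    simp only [pparts]
    grind
  have hleg :
      ∏ i ∈ range c, ∏ j ∈ range (p.parts (i + 2)), p.hookLength (i + 2) j = c ! := by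
    rw [← prod_hookLength_leg_of_pparts hp hy hyx]
    refine prod_congr rfl fun i hi => ?_
    rw [hrows i (mem_range.1 hi), prod_range_one]
  have hN : p.parts (c + 2) = 0 := by rw [hp, pparts_eq_zero_iff hy hyx]
  have h0 : p.parts 0 = x := by rw [hp]; rfl
  have h1 : p.parts 1 = y := by rw [hp]; rfl
  rw [p.hookProd_eq_prod_range hN, prod_range_succ', prod_range_succ', hleg, h0, h1,
    prod_hookLength_one_of_pparts hp hy hyx]
  rw [mul_assoc, prod_hookLength_zero_of_pparts hp hy hyx, hookFactor]
  ring

end HookProduct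

section Degree

variable {x y c : ℕ}

def degreeTermA (x y c : ℕ) : ℕ := (x + y + c).choose (y - 1) * (x + c).choose (c + 1)

def degreeTermB (x y c : ℕ) : ℕ := (x + y + c).choose x * (y + c - 1).choose (c + 1)

lemma hookFactor_mul_degreeTermA (hy : 1 ≤ y) (hyx : y ≤ x) :
    (c + 1) * hookFactor x y c * degreeTermA x y c
      = (x + y + c)! * (x * (y + c)) := by
  have e1 : (x + y + c).choose (y - 1) * (y - 1)! * (x + c + 1)! = (x + y + c)! := by
    have h := choose_mul_factorial_mul_factorial (show y - 1 ≤ x + y + c by omega)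
    rwa [show x + y + c - (y - 1) = x + c + 1 by omega] at h
  have e2 : (x + c).choose (c + 1) * (c + 1)! * (x - 1)! = (x + c)! := by
    have h := choose_mul_factorial_mul_factorial (show c + 1 ≤ x + c by omega)
    rwa [show x + c - (c + 1) = x - 1 by omega] at h
  have e3 : x ! = x * (x - 1)! := by
    rw [← mul_factorial_pred (by omega)]
  rw [hookFactor, degreeTermA, ← e1, factorial_succ (x + c), ← e2, e3, factorial_succ c]
  ring

lemma hookFactor_mul_degreeTermB (hy : 1 ≤ y) (hyx : y ≤ x) :
    (c + 1) * hookFactor x y c * degreeTermB x y c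
      = (x + y + c)! * ((x + c + 1) * (y - 1)) := by
  rcases Nat.lt_or_ge y 2 with hy2 | hy2
  · obtain rfl : y = 1 := by omega
    simp [degreeTermB]
  have e1 : (x + y + c).choose x * x ! * (y + c)! = (x + y + c)! := by
    have h := choose_mul_factorial_mul_factorial (show x ≤ x + y + c by omega)
    rwa [show x + y + c - x = y + c by omega] at h
  have e2 : (y + c - 1).choose (c + 1) * (c + 1)! * (y - 2)! = (y + c - 1)! := by
    have h := choose_mul_factorial_mul_factorial (show c + 1 ≤ y + c - 1 by omega)
    rwa [show y + c - 1 - (c + 1) = y - 2 by omega] at h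
  have e3 : (y + c)! = (y + c) * (y + c - 1)! := by
    rw [← mul_factorial_pred (by omega)]
  have e4 : (y - 1)! = (y - 1) * (y - 2)! := by
    rw [← mul_factorial_pred (by omega)]
    rfl
  rw [hookFactor, degreeTermB, ← e1, e3, ← e2, e4, factorial_succ c]
  ring

lemma mul_add_eq_mul_pred_add_mul (hy : 1 ≤ y) (hyx : y ≤ x) :
    x * (y + c) = (x + c + 1) * (y - 1) + (c + 1) * (x - y + 1) := by
  zify [hy, hyx]
  ring

lemma degreeTermB_le_degreeTermA (hy : 1 ≤ y) (hyx : y ≤ x) :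
    degreeTermB x y c ≤ degreeTermA x y c := by
  refine le_of_mul_le_mul_left ?_ (show 0 < (c + 1) * hookFactor x y c by
    unfold hookFactor; positivity)
  rw [hookFactor_mul_degreeTermA hy hyx, hookFactor_mul_degreeTermB hy hyx,
    mul_add_eq_mul_pred_add_mul hy hyx]
  exact Nat.mul_le_mul_left _ (Nat.le_add_right _ _)

lemma degree_of_pparts {p : SeqPartition} (hp : p.parts = pparts x y c) (hy : 1 ≤ y)
    (hyx : y ≤ x) : p.degree = degreeTermA x y c - degreeTermB x y c := by
  have hdiff : (c + 1) * hookFactor x y c * (degreeTermA x y c - degreeTermB x y c)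
      = (x + y + c)! * ((c + 1) * (x - y + 1)) := by
    rw [Nat.mul_sub, hookFactor_mul_degreeTermA hy hyx, hookFactor_mul_degreeTermB hy hyx,
      mul_add_eq_mul_pred_add_mul hy hyx, Nat.mul_add, Nat.add_sub_cancel_left]
  refine SeqPartition.degree_eq_of_hookProd_mul ?_
  rw [size_of_pparts hp]
  refine Nat.eq_of_mul_eq_mul_right (show 0 < (c + 1) * (x - y + 1) by positivity) ?_
  rw [← hdiff, ← hookProd_of_pparts hp hy hyx]
  ring

end Degree

namespace SeqPartition

lemma strictAnti_betaSeq (l : SeqPartition) (N : ℕ) :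
    StrictAnti fun i : Fin N => l.parts i + (N - 1 - i) := fun i j hij => by
  dsimp only
  have hle := l.antitone (Fin.le_def.1 hij.le)
  have hj := j.2
  rw [Fin.lt_def] at hij
  omega

lemma range_betaSeq (l : SeqPartition) (N : ℕ) :
    Set.range (fun i : Fin N => l.parts i + (N - 1 - i)) = ↑(l.betaSet N) := by
  ext v
  simp [betaSet, Fin.exists_iff]

lemma parts_eq_of_betaSet_eq {q r : SeqPartition} {N : ℕ} (hq : q.parts N = 0)
    (hr : r.parts N = 0) (h : q.betaSet N = r.betaSet N) : q.parts = r.parts := by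
  have heq := ((q.strictAnti_betaSeq N).range_inj (r.strictAnti_betaSeq N)).1
    (by rw [range_betaSeq, range_betaSeq, h])
  funext i
  rcases lt_or_ge i N with hi | hi
  · have := congrFun heq ⟨i, hi⟩
    simp only at this
    omega
  · have := q.antitone hi
    have := r.antitone hi
    omega

end SeqPartition

section Beads

variable {p q : SeqPartition} {x y c N : ℕ}

def ppartsBeads (x y c N v : ℕ) : Prop :=
  (v < N - 1 ∧ v ≠ N - 2 - c) ∨ v = y + N - 2 ∨ v = x + N - 1

lemma mem_betaSet_of_pparts (hp : p.parts = pparts x y c) (hy : 1 ≤ y) (hyx : y ≤ x)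
    (hN : c + 2 ≤ N) (v : ℕ) : v ∈ p.betaSet N ↔ ppartsBeads x y c N v := by
  simp only [betaSet, mem_image, mem_range, hp, ppartsBeads]
  constructor
  · rintro ⟨i, hi, rfl⟩
    simp only [pparts]
    grind
  · rintro (⟨hv, hgap⟩ | rfl | rfl)
    · rcases Nat.lt_or_ge v (N - 1 - c) with hv' | hv'
      · exact ⟨N - 1 - v, by omega, by simp only [pparts]; grind⟩
      · exact ⟨N - v, by omega, by simp only [pparts]; grind⟩
    · exact ⟨1, by omega, by simp only [pparts]; grind⟩
    · exact ⟨0, by omega, by simp only [pparts]; grind⟩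

lemma parts_eq_pparts_of_mem_betaSet_iff (hq : q.parts N = 0) (hy : 1 ≤ y) (hyx : y ≤ x)
    (hN : c + 2 ≤ N) (h : ∀ v, v ∈ q.betaSet N ↔ ppartsBeads x y c N v) :
    q.parts = pparts x y c := by
  let r := ppartsPartition x y c hy hyx
  have hr : r.parts = pparts x y c := rfl
  refine (SeqPartition.parts_eq_of_betaSet_eq hq ((pparts_eq_zero_iff hy hyx).2 hN) ?_).trans hr
  ext v
  rw [h, mem_betaSet_of_pparts hr hy hyx hN]

end Beads

section Removal

variable {p q : SeqPartition} {x y c h : ℕ}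

/-- The hook lies in the leg; is the hook of the cell `(1, 0)`; lies in the second row; is the
hook of the cell `(0, 0)`; starts in the first row and ends in the second; lies in the first row. -/
lemma removeHook_pparts_cases (hp : p.parts = pparts x y c) (hy : 1 ≤ y) (hyx : y ≤ x)
    (hr : RemoveHook p q h) :
    (h ≤ c ∧ q.parts = pparts x y (c - h)) ∨
    h = y + c ∨
    (h < y ∧ q.parts = pparts x (y - h) c) ∨
    h = x + c + 1 ∨
    (x - y + 2 ≤ h ∧ h ≤ x ∧ q.parts = pparts (y - 1) (x - h + 1) c) ∨
    (h ≤ x - y ∧ q.parts = pparts (x - h) y c) := by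
  obtain ⟨N, hpN, hqN, b, hb, hhb, hgap, hq⟩ := hr
  have hN : c + 2 ≤ N := (pparts_eq_zero_iff hy hyx).1 (hp ▸ hpN)
  have hbeads := mem_betaSet_of_pparts hp hy hyx hN
  rw [hbeads] at hb hgap
  have shape : ∀ {x' y' c'}, 1 ≤ y' → y' ≤ x' → c' + 2 ≤ N →
      (∀ v, (v = b - h ∨ v ≠ b ∧ ppartsBeads x y c N v) ↔ ppartsBeads x' y' c' N v) →
      q.parts = pparts x' y' c' := fun hy' hyx' hN' hiff =>
    parts_eq_pparts_of_mem_betaSet_iff hqN hy' hyx' hN' fun v => by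
      rw [hq, mem_insert, mem_erase, hbeads, hiff]
  unfold ppartsBeads at hb hgap shape
  rcases hb with ⟨hlt, hne⟩ | rfl | rfl
  · exact Or.inl ⟨by omega, shape hy hyx (by omega) fun v => by omega⟩
  · rcases lt_or_ge (y + N - 2 - h) (N - 1) with hw | hw
    · exact Or.inr <| Or.inl (by omega)
    · exact Or.inr <| Or.inr <| Or.inl
        ⟨by omega, shape (by omega) (by omega) hN fun v => by omega⟩
  · rcases lt_or_ge (x + N - 1 - h) (N - 1) with hw | hw
    · exact Or.inr <| Or.inr <| Or.inr <| Or.inl (by omega)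
    rcases lt_or_ge (x + N - 1 - h) (y + N - 2) with hw' | hw'
    · exact Or.inr <| Or.inr <| Or.inr <| Or.inr <| Or.inl
        ⟨by omega, by omega, shape (by omega) (by omega) hN fun v => by omega⟩
    · exact Or.inr <| Or.inr <| Or.inr <| Or.inr <| Or.inr
        ⟨by omega, shape hy (by omega) hN fun v => by omega⟩

end Removal

section Parity

lemma even_choose_two_pow {t k : ℕ} (h0 : k ≠ 0) (h1 : k ≠ 2 ^ t) :
    Even ((2 ^ t).choose k) := by
  rcases lt_or_ge (2 ^ t) k with hlt | hle
  · simp [choose_eq_zero_of_lt hlt]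
  · exact even_iff_two_dvd.2 (prime_two.dvd_choose_pow h0 h1)

lemma odd_choose_two_pow_sub_one {t k : ℕ} (hk : k ≤ 2 ^ t - 1) :
    Odd ((2 ^ t - 1).choose k) := by
  induction k with
  | zero => simp
  | succ k ih =>
    have hpos : 0 < 2 ^ t := Nat.two_pow_pos t
    have hpascal : (2 ^ t).choose (k + 1) = (2 ^ t - 1).choose k + (2 ^ t - 1).choose (k + 1) := by
      rw [← choose_succ_succ', Nat.sub_add_cancel hpos]
    have heven : Even ((2 ^ t).choose (k + 1)) := even_choose_two_pow (by omega) (by omega)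
    rw [hpascal, Nat.even_add] at heven
    exact Nat.not_even_iff_odd.1 fun h => Nat.not_even_iff_odd.2 (ih (by omega)) (heven.2 h)

lemma choose_two_pow_add_mod_two {t r k : ℕ} (hk : k < 2 ^ t) :
    (2 ^ t + r).choose k % 2 = r.choose k % 2 := by
  have hdvd :
      2 ∣ ∑ ij ∈ (antidiagonal k).erase (0, k), (2 ^ t).choose ij.1 * r.choose ij.2 := by
    refine dvd_sum fun ij hij => Dvd.dvd.mul_right ?_ _
    rw [mem_erase, HasAntidiagonal.mem_antidiagonal] at hij
    refine prime_two.dvd_choose_pow (fun h0 => hij.1 (Prod.ext h0 (by omega))) (by omega)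
  rw [add_choose_eq, ← add_sum_erase _ _ (by simp : ((0 : ℕ), k) ∈ antidiagonal k)]
  simp only [choose_zero_right, one_mul]
  omega

lemma even_choose_two_pow_add {t r k : ℕ} (hr : r < k) (hk : k < 2 ^ t) :
    Even ((2 ^ t + r).choose k) := by
  rw [Nat.even_iff, choose_two_pow_add_mod_two hk, choose_eq_zero_of_lt hr]

lemma odd_choose_two_pow_add_self {t r : ℕ} (hr : r < 2 ^ t) :
    Odd ((2 ^ t + r).choose r) := by
  rw [Nat.odd_iff, choose_two_pow_add_mod_two hr, choose_self]

variable {p : SeqPartition} {x y c T : ℕ}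

lemma not_isOdd_of_pparts (hp : p.parts = pparts x y c) (hy : 1 ≤ y) (hyx : y ≤ x)
    (hA : Even (degreeTermA x y c)) (hB : Even (degreeTermB x y c)) : ¬ p.IsOdd := by
  rw [IsOdd, degree_of_pparts hp hy hyx, Nat.not_odd_iff_even]
  exact (Nat.even_sub (degreeTermB_le_degreeTermA hy hyx)).2 (iff_of_true hA hB)

lemma not_isOdd_of_pparts_of_rem_lt {r : ℕ} (hp : p.parts = pparts x y c) (hy : 1 ≤ y)
    (hyx : y ≤ x) (hn : x + y + c = 2 ^ T + r) (hry : r < y - 1) (hx : x < 2 ^ T) :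
    ¬ p.IsOdd := by
  refine not_isOdd_of_pparts hp hy hyx ?_ ?_
  · rw [degreeTermA, hn]
    exact (even_choose_two_pow_add hry (by omega)).mul_right _
  · rw [degreeTermB, hn]
    exact (even_choose_two_pow_add (by omega) hx).mul_right _

lemma not_isOdd_of_pparts_of_add_eq_two_pow (hp : p.parts = pparts x y c) (hy : 1 ≤ y)
    (hyx : y < x) (hxc : x + c = 2 ^ T) (hx : x < 2 ^ T) (hc : c + 1 < 2 ^ T) :
    ¬ p.IsOdd := by
  refine not_isOdd_of_pparts hp hy hyx.le ?_ ?_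
  · rw [degreeTermA, hxc]
    exact (even_choose_two_pow (by omega) (by omega)).mul_left _
  · rw [degreeTermB, show x + y + c = 2 ^ T + y by omega]
    exact (even_choose_two_pow_add hyx hx).mul_right _

lemma isOdd_of_pparts_of_add_eq_two_pow (hp : p.parts = pparts x x c) (hx1 : 1 ≤ x)
    (hxc : x + c = 2 ^ T) (hx : x < 2 ^ T) (hc : c + 1 < 2 ^ T) : p.IsOdd := by
  rw [IsOdd, degree_of_pparts hp hx1 le_rfl]
  refine Nat.Even.sub_odd (degreeTermB_le_degreeTermA hx1 le_rfl) ?_ ?_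
  · rw [degreeTermA, hxc]
    exact (even_choose_two_pow (by omega) (by omega)).mul_left _
  · rw [degreeTermB, show x + x + c = 2 ^ T + x by omega, show x + c - 1 = 2 ^ T - 1 by omega]
    exact (odd_choose_two_pow_add_self hx).mul (odd_choose_two_pow_sub_one (by omega))

end Parity

section OddHookRemoval

variable {t m h : ℕ} {p q : SeqPartition}

lemma parts_eq_of_removeHook_one_mm (h2m : 2 ≤ m) (hm : m < 2 ^ t)
    (hp : p.parts = pparts m m (2 ^ t - m)) (hq : q.IsOdd) (hr : RemoveHook p q 1) :
    q.parts = pparts m m (2 ^ t - m - 1) := by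
  rcases removeHook_pparts_cases hp (by omega) le_rfl hr with
    ⟨-, hq'⟩ | he | ⟨-, hq'⟩ | he | ⟨he, -⟩ | ⟨he, -⟩
  · exact hq'
  · omega
  · exact absurd hq (not_isOdd_of_pparts_of_add_eq_two_pow hq' (by omega) (by omega)
      (by omega) hm (by omega))
  all_goals omega

lemma parts_eq_of_removeHook_mm (h2 : 2 ≤ h) (hhm : h < m) (hm : m < 2 ^ t)
    (hp : p.parts = pparts m m (2 ^ t - m)) (hq : q.IsOdd) (hr : RemoveHook p q h) :
    q.parts = pparts (m - 1) (m - h + 1) (2 ^ t - m) := by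
  rcases removeHook_pparts_cases hp (by omega) le_rfl hr with
    ⟨hleg, hq'⟩ | he | ⟨-, hq'⟩ | he | ⟨-, -, hq'⟩ | ⟨he, -⟩
  · exact absurd hq (not_isOdd_of_pparts_of_rem_lt hq' (by omega) le_rfl
      (show m + m + (2 ^ t - m - h) = 2 ^ t + (m - h) by omega) (by omega) hm)
  · omega
  · exact absurd hq (not_isOdd_of_pparts_of_add_eq_two_pow hq' (by omega) (by omega)
      (by omega) hm (by omega))
  · omega
  · exact hq'
  · omega

lemma parts_eq_of_removeHook_mm_pred (h2 : 2 ≤ h) (hhm : h < m) (hm : m < 2 ^ t)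
    (hp : p.parts = pparts m m (2 ^ t - m - 1)) (hq : q.IsOdd) (hr : RemoveHook p q h) :
    q.parts = pparts m (m - h) (2 ^ t - m - 1) := by
  rcases removeHook_pparts_cases hp (by omega) le_rfl hr with
    ⟨hleg, hq'⟩ | he | ⟨-, hq'⟩ | he | ⟨-, -, hq'⟩ | ⟨he, -⟩
  · exact absurd hq (not_isOdd_of_pparts_of_rem_lt hq' (by omega) le_rfl
      (show m + m + (2 ^ t - m - 1 - h) = 2 ^ t + (m - 1 - h) by omega) (by omega) hm)
  · omega
  · exact hq'
  · omega
  · exact absurd hq (not_isOdd_of_pparts_of_rem_lt hq' (by omega) (by omega)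
      (show m - 1 + (m - h + 1) + (2 ^ t - m - 1) = 2 ^ t + (m - h - 1) by omega)
      (by omega) (by omega))
  · omega

lemma parts_eq_of_removeHook_one_shifted (h2 : 2 ≤ h) (hhm : h < m) (hm : m < 2 ^ t)
    (hp : p.parts = pparts (m - 1) (m - h + 1) (2 ^ t - m)) (hq : q.IsOdd)
    (hr : RemoveHook p q 1) :
    q.parts = pparts (m - 1) (m - h) (2 ^ t - m) := by
  rcases removeHook_pparts_cases hp (by omega) (by omega) hr with
    ⟨-, hq'⟩ | he | ⟨-, hq'⟩ | he | ⟨he, -⟩ | ⟨harm, hq'⟩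
  · exact absurd hq (not_isOdd_of_pparts_of_rem_lt hq' (by omega) (by omega)
      (show m - 1 + (m - h + 1) + (2 ^ t - m - 1) = 2 ^ t + (m - h - 1) by omega)
      (by omega) (by omega))
  · omega
  · rwa [show m - h + 1 - 1 = m - h by omega] at hq'
  · omega
  · omega
  · exact absurd hq (not_isOdd_of_pparts_of_rem_lt hq' (by omega) (by omega)
      (show m - 1 - 1 + (m - h + 1) + (2 ^ t - m) = 2 ^ t + (m - h - 1) by omega)
      (by omega) (by omega))

end OddHookRemoval

theorem stmt_18_general (t m l : ℕ) (hm : m < 2 ^ t)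
    (hl0 : 0 < l) (hl : 2 ^ l < m) (lam : SeqPartition)
    (hlam : lam.parts = pparts m m (2 ^ t - m)) :
    lam.IsOdd ∧
    (∀ mu : SeqPartition, mu.IsOdd → RemoveHook lam mu 1 →
      mu.parts = pparts m m (2 ^ t - m - 1)) ∧
    (∀ mu nu : SeqPartition, mu.IsOdd → RemoveHook lam mu 1 →
      nu.IsOdd → RemoveHook mu nu (2 ^ l) →
      nu.parts = pparts m (m - 2 ^ l) (2 ^ t - m - 1)) ∧
    (∀ mu : SeqPartition, mu.IsOdd → RemoveHook lam mu (2 ^ l) →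
      mu.parts = pparts (m - 1) (m - 2 ^ l + 1) (2 ^ t - m)) ∧
    (∀ mu nu : SeqPartition, mu.IsOdd → RemoveHook lam mu (2 ^ l) →
      nu.IsOdd → RemoveHook mu nu 1 →
      nu.parts = pparts (m - 1) (m - 2 ^ l) (2 ^ t - m)) ∧
    (∀ nu1 nu2 : SeqPartition, nu1.IsOdd → nu2.IsOdd →
      (∃ mu : SeqPartition, mu.IsOdd ∧ RemoveHook lam mu 1 ∧ RemoveHook mu nu1 (2 ^ l)) →
      (∃ mu : SeqPartition, mu.IsOdd ∧ RemoveHook lam mu (2 ^ l) ∧ RemoveHook mu nu2 1) →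
      nu1 ≠ nu2) := by
  have h2 : 2 ≤ 2 ^ l := Nat.le_self_pow hl0.ne' 2
  have f₀ : ∀ mu : SeqPartition, mu.IsOdd → RemoveHook lam mu 1 →
      mu.parts = pparts m m (2 ^ t - m - 1) := fun _ =>
    parts_eq_of_removeHook_one_mm (by omega) hm hlam
  have fₗ : ∀ mu : SeqPartition, mu.IsOdd → RemoveHook lam mu (2 ^ l) →
      mu.parts = pparts (m - 1) (m - 2 ^ l + 1) (2 ^ t - m) := fun _ =>
    parts_eq_of_removeHook_mm h2 hl hm hlam
  have fₗf₀ : ∀ mu nu : SeqPartition, mu.IsOdd → RemoveHook lam mu 1 →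
      nu.IsOdd → RemoveHook mu nu (2 ^ l) →
      nu.parts = pparts m (m - 2 ^ l) (2 ^ t - m - 1) := fun mu _ hmu hr =>
    parts_eq_of_removeHook_mm_pred h2 hl hm (f₀ mu hmu hr)
  have f₀fₗ : ∀ mu nu : SeqPartition, mu.IsOdd → RemoveHook lam mu (2 ^ l) →
      nu.IsOdd → RemoveHook mu nu 1 →
      nu.parts = pparts (m - 1) (m - 2 ^ l) (2 ^ t - m) := fun mu _ hmu hr =>
    parts_eq_of_removeHook_one_shifted h2 hl hm (fₗ mu hmu hr)
  refine ⟨isOdd_of_pparts_of_add_eq_two_pow hlam (by omega) (by omega) hm (by omega),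
    f₀, fₗf₀, fₗ, f₀fₗ, ?_⟩
  rintro nu nu' hnu hnu' ⟨mu, hmu, hr, hr'⟩ ⟨mu', hmu', hs, hs'⟩ rfl
  have hrow0 :=
    congrFun ((fₗf₀ mu nu hmu hr hnu hr').symm.trans (f₀fₗ mu' nu hmu' hs hnu' hs')) 0
  simp only [pparts, if_pos] at hrow0
  omega

theorem stmt_18 (t m l : ℕ) (ht : 3 ≤ t) (hm0 : 0 < m) (hm : m < 2 ^ t)
    (hl0 : 0 < l) (hl : 2 ^ l < m) (lam : SeqPartition)
    (hlam : lam.parts = pparts m m (2 ^ t - m)) :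
    lam.IsOdd ∧
    (∀ mu : SeqPartition, mu.IsOdd → RemoveHook lam mu 1 →
      mu.parts = pparts m m (2 ^ t - m - 1)) ∧
    (∀ mu nu : SeqPartition, mu.IsOdd → RemoveHook lam mu 1 →
      nu.IsOdd → RemoveHook mu nu (2 ^ l) →
      nu.parts = pparts m (m - 2 ^ l) (2 ^ t - m - 1)) ∧
    (∀ mu : SeqPartition, mu.IsOdd → RemoveHook lam mu (2 ^ l) →
      mu.parts = pparts (m - 1) (m - 2 ^ l + 1) (2 ^ t - m)) ∧
    (∀ mu nu : SeqPartition, mu.IsOdd → RemoveHook lam mu (2 ^ l) →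
      nu.IsOdd → RemoveHook mu nu 1 →
      nu.parts = pparts (m - 1) (m - 2 ^ l) (2 ^ t - m)) ∧
    (∀ nu1 nu2 : SeqPartition, nu1.IsOdd → nu2.IsOdd →
      (∃ mu : SeqPartition, mu.IsOdd ∧ RemoveHook lam mu 1 ∧ RemoveHook mu nu1 (2 ^ l)) →
      (∃ mu : SeqPartition, mu.IsOdd ∧ RemoveHook lam mu (2 ^ l) ∧ RemoveHook mu nu2 1) →
      nu1 ≠ nu2) :=
  stmt_18_general t m l hm hl0 hl lam hlam
end
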